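/- arXiv:2307.07283 — 10 statements merged into one kernel-verified Lean document; each statement's English description precedes it below -/
import Mathlib

section
/- Let U be a real normed space, 𝒰 ⊆ U convex, ψ : 𝒰 → ℝ convex and lower semicontinuous, û ∈ U, and γ > 0. Then there exists ρ̂ ∈ U* with ‖ρ̂‖ ≤ γ such that inf_{u ∈ 𝒰} { ψ(u) + γ‖u − û‖ } = inf_{u ∈ 𝒰} { ψ(u) − ρ̂(u − û) }. -/
open Filter Topology

set_option maxHeartbeats 2000000 in
/-- Minimax/norm-duality lemma. For a convex lower semicontinuous
`ψ : 𝒰 → ℝ`, `uhat ∈ U` and `γ > 0`, there exists `ρhat ∈ U*` with `‖ρhat‖ ≤ γ` such that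
`inf_{u ∈ 𝒰} {ψ(u) + γ‖u − uhat‖} = inf_{u ∈ 𝒰} {ψ(u) − ρhat(u − uhat)}`. -/
theorem stmt1_minimax_norm_duality
    {U : Type*} [NormedAddCommGroup U] [NormedSpace ℝ U]
    (𝒰 : Set U) (hne : 𝒰.Nonempty) (hconv : Convex ℝ 𝒰)
    (ψ : U → ℝ) (hψconv : ConvexOn ℝ 𝒰 ψ) (hψlsc : LowerSemicontinuousOn ψ 𝒰)
    (uhat : U) (γ : ℝ) (hγ : 0 < γ) :
    ∃ ρhat : U →L[ℝ] ℝ, ‖ρhat‖ ≤ γ ∧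
      sInf {x : ℝ | ∃ u ∈ 𝒰, x = ψ u + γ * ‖u - uhat‖} =
        sInf {x : ℝ | ∃ u ∈ 𝒰, x = ψ u - ρhat (u - uhat)} := by
  classical
  set S : Set ℝ := {x : ℝ | ∃ u ∈ 𝒰, x = ψ u + γ * ‖u - uhat‖} with hS
  obtain ⟨u₀, hu₀⟩ := hne
  have hSne : S.Nonempty := ⟨_, u₀, hu₀, rfl⟩
  by_cases hbdd : BddBelow S
  · -- main case
    set m : ℝ := sInf S with hm
    have hmle : ∀ u ∈ 𝒰, m ≤ ψ u + γ * ‖u - uhat‖ := fun u hu =>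
      csInf_le hbdd ⟨u, hu, rfl⟩
    -- the open convex cone K and the shifted epigraph E
    set K : Set (U × ℝ) := {p | p.2 + γ * ‖p.1‖ < 0} with hK
    set E : Set (U × ℝ) := {p | ∃ u ∈ 𝒰, p.1 = u - uhat ∧ ψ u - m ≤ p.2} with hE
    have hKopen : IsOpen K := by
      have : Continuous fun p : U × ℝ => p.2 + γ * ‖p.1‖ := by continuity
      simpa [hK] using isOpen_lt this continuous_const
    have hKconv : Convex ℝ K := by
      intro p hp q hq a b ha hb hab
      simp only [hK, Set.mem_setOf_eq] at *
      have h1 : ‖a • p.1 + b • q.1‖ ≤ a * ‖p.1‖ + b * ‖q.1‖ := by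
        calc ‖a • p.1 + b • q.1‖ ≤ ‖a • p.1‖ + ‖b • q.1‖ := norm_add_le _ _
        _ = a * ‖p.1‖ + b * ‖q.1‖ := by
            rw [norm_smul, norm_smul, Real.norm_eq_abs, Real.norm_eq_abs,
              abs_of_nonneg ha, abs_of_nonneg hb]
      have h2 : (a • p + b • q).2 + γ * ‖(a • p + b • q).1‖
          ≤ a * (p.2 + γ * ‖p.1‖) + b * (q.2 + γ * ‖q.1‖) := by
        simp only [Prod.smul_snd, Prod.smul_fst, Prod.fst_add, Prod.snd_add, smul_eq_mul]
        nlinarith [h1]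
      set c : ℝ := max (p.2 + γ * ‖p.1‖) (q.2 + γ * ‖q.1‖) with hc
      have hcneg : c < 0 := max_lt hp hq
      have hac : a * (p.2 + γ * ‖p.1‖) ≤ a * c :=
        mul_le_mul_of_nonneg_left (le_max_left _ _) ha
      have hbc : b * (q.2 + γ * ‖q.1‖) ≤ b * c :=
        mul_le_mul_of_nonneg_left (le_max_right _ _) hb
      nlinarith [h2, hac, hbc]
    have hEconv : Convex ℝ E := by
      rintro p ⟨u, hu, hpu, hpψ⟩ q ⟨w, hw, hqw, hqψ⟩ a b ha hb hab
      refine ⟨a • u + b • w, hconv hu hw ha hb hab, ?_, ?_⟩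
      · simp only [Prod.smul_fst, Prod.fst_add, hpu, hqw]
        have h : a • (u - uhat) + b • (w - uhat) = a • u + b • w - (a + b) • uhat := by
          module
        rw [h, hab, one_smul]
      · have hcv := hψconv.2 hu hw ha hb hab
        rw [smul_eq_mul, smul_eq_mul] at hcv
        simp only [Prod.smul_snd, Prod.snd_add, smul_eq_mul]
        have habm : a * m + b * m = m := by rw [← add_mul, hab, one_mul]
        nlinarith [mul_le_mul_of_nonneg_left hpψ ha, mul_le_mul_of_nonneg_left hqψ hb, hcv,
          habm]
    have hdisj : Disjoint K E := by
      rw [Set.disjoint_left]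
      rintro p hpK ⟨u, hu, hpu, hpψ⟩
      simp only [hK, Set.mem_setOf_eq] at hpK
      have := hmle u hu
      rw [hpu] at hpK
      linarith
    obtain ⟨f, s, hfK, hfE⟩ := geometric_hahn_banach_open hKconv hKopen hEconv hdisj
    set ρ : U →L[ℝ] ℝ := f.comp (ContinuousLinearMap.inl ℝ U ℝ) with hρ
    set a : ℝ := f (0, 1) with ha
    have hsplit : ∀ (v : U) (t : ℝ), f (v, t) = ρ v + t * a := by
      intro v t
      have h : (v, t) = (v, (0 : ℝ)) + t • ((0 : U), (1 : ℝ)) := by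
        simp [Prod.ext_iff]
      rw [h, map_add, map_smul]
      simp [hρ, ha, smul_eq_mul, ContinuousLinearMap.inl_apply]
    -- membership facts
    have hKmem : ∀ (v : U) (ε : ℝ), 0 < ε → ρ v + (-(γ * ‖v‖) - ε) * a < s := by
      intro v ε hε
      have : ((v, -(γ * ‖v‖) - ε) : U × ℝ) ∈ K := by
        simp only [hK, Set.mem_setOf_eq]; linarith
      have := hfK _ this
      rwa [hsplit] at this
    have hEmem : ∀ u ∈ 𝒰, ∀ t, ψ u - m ≤ t → s ≤ ρ (u - uhat) + t * a := by
      intro u hu t ht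
      have : ((u - uhat, t) : U × ℝ) ∈ E := ⟨u, hu, rfl, ht⟩
      have := hfE _ this
      rwa [hsplit] at this
    -- s ≥ 0 would need a ≥ 0 first; derive a ≥ 0
    have hanneg : 0 ≤ a := by
      by_contra h
      push_neg at h
      set t : ℝ := max (ψ u₀ - m) ((s - 1 - ρ (u₀ - uhat)) / a) with htdef
      have h1 : s ≤ ρ (u₀ - uhat) + t * a := hEmem u₀ hu₀ t (le_max_left _ _)
      have h2 : (s - 1 - ρ (u₀ - uhat)) / a ≤ t := le_max_right _ _
      have h3 : t * a ≤ s - 1 - ρ (u₀ - uhat) := by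
        have := mul_le_mul_of_nonpos_right h2 (le_of_lt h)
        calc t * a ≤ (s - 1 - ρ (u₀ - uhat)) / a * a := by nlinarith
        _ = s - 1 - ρ (u₀ - uhat) := div_mul_cancel₀ _ (ne_of_lt h)
      linarith
    have hsnn : 0 ≤ s := by
      by_contra h
      push_neg at h
      rcases eq_or_lt_of_le hanneg with heq | hpos
      · have := hKmem 0 1 one_pos
        simp [← heq] at this
        linarith
      · have hεpos : 0 < -s / a := div_pos (by linarith) hpos
        have := hKmem 0 (-s / a) hεpos
        simp only [norm_zero, mul_zero, neg_zero, zero_sub, map_zero, zero_add] at this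
        rw [neg_mul, div_mul_cancel₀ _ (ne_of_gt hpos), neg_neg] at this
        exact lt_irrefl s this
    have hapos : 0 < a := by
      rcases eq_or_lt_of_le hanneg with heq | hpos
      · exfalso
        -- a = 0 : then ρ v < s for all v
        have hρlt : ∀ v : U, ρ v < s := by
          intro v
          have := hKmem v 1 one_pos
          rw [← heq] at this
          simpa using this
        have hs0 : 0 < s := by
          have := hρlt 0
          simpa using this
        have hρzero : ∀ v : U, ρ v ≤ 0 := by
          intro v
          by_contra h
          push_neg at h
          have hc : (0 : ℝ) < s / ρ v := by positivity
          have := hρlt ((s / ρ v) • v)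
          rw [map_smul, smul_eq_mul, div_mul_cancel₀ _ (ne_of_gt h)] at this
          exact lt_irrefl _ this
        have hρ0 : ∀ v : U, ρ v = 0 := by
          intro v
          have h1 := hρzero v
          have h2 := hρzero (-v)
          rw [map_neg] at h2
          linarith
        have := hEmem u₀ hu₀ (ψ u₀ - m) le_rfl
        rw [hρ0, ← heq] at this
        simp at this
        linarith
      · exact hpos
    -- limit of K inequality: ρ v ≤ s + γ‖v‖ a
    have hKlim : ∀ v : U, ρ v ≤ s + γ * ‖v‖ * a := by
      intro v
      by_contra h
      push_neg at h
      set d : ℝ := ρ v - (s + γ * ‖v‖ * a) with hd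
      have hdpos : 0 < d := by simp only [hd]; linarith
      have hεpos : 0 < d / a := by positivity
      have := hKmem v (d / a) hεpos
      have hda : d / a * a = d := div_mul_cancel₀ _ (ne_of_gt hapos)
      nlinarith
    -- scaling: ρ v ≤ γ a ‖v‖
    have hρbound : ∀ v : U, ρ v ≤ γ * a * ‖v‖ := by
      intro v
      by_contra h
      push_neg at h
      obtain ⟨d, hd⟩ : ∃ d : ℝ, d = ρ v - γ * a * ‖v‖ := ⟨_, rfl⟩
      have hdpos : 0 < d := by rw [hd]; linarith
      obtain ⟨c, hc⟩ : ∃ c : ℝ, c = (s + 1) / d := ⟨_, rfl⟩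
      have hcpos : 0 < c := by rw [hc]; positivity
      have h1 := hKlim (c • v)
      rw [map_smul, smul_eq_mul, norm_smul, Real.norm_eq_abs, abs_of_pos hcpos] at h1
      -- c * ρ v ≤ s + γ * (c * ‖v‖) * a, i.e. c * d ≤ s
      have h2 : c * d ≤ s := by rw [hd]; nlinarith [h1]
      have h3 : c * d = s + 1 := by
        rw [hc, div_mul_cancel₀ _ (ne_of_gt hdpos)]
      linarith
    -- define ρhat
    refine ⟨(-a⁻¹) • ρ, ?_, ?_⟩
    · apply ContinuousLinearMap.opNorm_le_bound _ (le_of_lt hγ)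
      intro v
      have h1 := hρbound v
      have h2 := hρbound (-v)
      rw [map_neg, norm_neg] at h2
      have habs : |ρ v| ≤ γ * a * ‖v‖ := abs_le.2 ⟨by linarith, h1⟩
      rw [ContinuousLinearMap.smul_apply, smul_eq_mul, Real.norm_eq_abs, abs_mul,
        abs_neg, abs_inv, abs_of_pos hapos]
      rw [inv_mul_le_iff₀ hapos]
      nlinarith [habs]
    · -- the inf equality
      have hlow : ∀ u ∈ 𝒰, m ≤ ψ u - ((-a⁻¹) • ρ) (u - uhat) := by
        intro u hu
        have h1 := hEmem u hu (ψ u - m) le_rfl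
        rw [ContinuousLinearMap.smul_apply, smul_eq_mul]
        have h2 : s ≤ ρ (u - uhat) + (ψ u - m) * a := h1
        have h3 : 0 ≤ ρ (u - uhat) + (ψ u - m) * a := le_trans hsnn h2
        have h4 : -(ρ (u - uhat)) / a ≤ ψ u - m := by
          rw [div_le_iff₀ hapos]; linarith
        have h5 : -a⁻¹ * ρ (u - uhat) = -(ρ (u - uhat)) / a := by ring
        rw [h5]
        linarith
      set T : Set ℝ := {x : ℝ | ∃ u ∈ 𝒰, x = ψ u - ((-a⁻¹) • ρ) (u - uhat)} with hT
      have hTne : T.Nonempty := ⟨_, u₀, hu₀, rfl⟩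
      have hTbdd : BddBelow T := ⟨m, by rintro x ⟨u, hu, rfl⟩; exact hlow u hu⟩
      apply le_antisymm
      · -- m ≤ sInf T
        exact le_csInf hTne (by rintro x ⟨u, hu, rfl⟩; exact hlow u hu)
      · -- sInf T ≤ m = sInf S
        apply le_csInf hSne
        rintro x ⟨u, hu, rfl⟩
        have hmem : ψ u - ((-a⁻¹) • ρ) (u - uhat) ∈ T := ⟨u, hu, rfl⟩
        have hle : ψ u - ((-a⁻¹) • ρ) (u - uhat) ≤ ψ u + γ * ‖u - uhat‖ := by
          rw [ContinuousLinearMap.smul_apply, smul_eq_mul]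
          have h1 := hρbound (u - uhat)
          have h5 : -a⁻¹ * ρ (u - uhat) = -(ρ (u - uhat) / a) := by ring
          rw [h5]
          have h2 : ρ (u - uhat) / a ≤ γ * ‖u - uhat‖ := by
            rw [div_le_iff₀ hapos]; nlinarith
          linarith
        exact le_trans (csInf_le hTbdd hmem) hle
  · -- unbounded case: both infima are of unbounded sets, equal to sInf ∅
    refine ⟨0, by simp [le_of_lt hγ], ?_⟩
    have hTub : ¬ BddBelow {x : ℝ | ∃ u ∈ 𝒰, x = ψ u - (0 : U →L[ℝ] ℝ) (u - uhat)} := by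
      intro ⟨b, hb⟩
      apply hbdd
      refine ⟨b, ?_⟩
      rintro x ⟨u, hu, rfl⟩
      have : ψ u - (0 : U →L[ℝ] ℝ) (u - uhat) ∈
          {x : ℝ | ∃ u ∈ 𝒰, x = ψ u - (0 : U →L[ℝ] ℝ) (u - uhat)} := ⟨u, hu, rfl⟩
      have hψb := hb this
      simp only [ContinuousLinearMap.zero_apply, sub_zero] at hψb
      have : 0 ≤ γ * ‖u - uhat‖ := by positivity
      linarith
    rw [csInf_of_not_bddBelow hbdd, csInf_of_not_bddBelow hTub]
end

section
/- First-order Ekeland variant: Let U be a Banach space, 𝒰 ⊆ U closed and convex, and J : 𝒰 → ℝ lower semicontinuous and Gateaux differentiable. Let ū ∈ 𝒰 and r > 0 be such that J(ū) ≤ J(s) for all s ∈ 𝒰 with ‖s − ū‖ ≤ r. Let u ∈ 𝒰 and ε > 0 satisfy ‖u − ū‖ < r and J(u) ≤ J(ū) + ε. Then for every λ ∈ (0, r − ‖u − ū‖) there exist û ∈ 𝒰 and ρ̂ ∈ U* such that (i) ‖u − û‖ ≤ λ, (ii) ‖ρ̂‖_{U*} ≤ ε/λ, and (iii) ρ̂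 ∈ J'(û) + N_𝒰(û). -/
open Filter Topology

theorem my_lsc_sublevel_closed {U : Type*} [NormedAddCommGroup U]
    {S : Set U} (hS : IsClosed S) {g : U → ℝ} (hg : LowerSemicontinuousOn g S) (c : ℝ) :
    IsClosed {x | x ∈ S ∧ g x ≤ c} := by
  refine isClosed_of_closure_subset fun x hx => ?_
  have hxS : x ∈ S := hS.closure_subset (closure_mono (fun y hy => hy.1) hx)
  refine ⟨hxS, ?_⟩
  by_contra hgt
  push_neg at hgt
  have hev : ∀ᶠ y in 𝓝[S] x, c < g y := hg x hxS c hgt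
  have hne : (𝓝[{x | x ∈ S ∧ g x ≤ c}] x).NeBot := mem_closure_iff_nhdsWithin_neBot.1 hx
  have hev2 : ∀ᶠ y in 𝓝[{x | x ∈ S ∧ g x ≤ c}] x, c < g y :=
    hev.filter_mono (nhdsWithin_mono x fun y hy => hy.1)
  obtain ⟨y, hy1, hy2⟩ := (hev2.and (eventually_mem_nhdsWithin)).exists
  exact absurd hy2.2 (not_le.2 hy1)

theorem my_ekeland {U : Type*} [NormedAddCommGroup U] [CompleteSpace U]
    (S : Set U) (hS : IsClosed S) (f : U → ℝ) (hlsc : LowerSemicontinuousOn f S)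
    (m : ℝ) (hm : ∀ s ∈ S, m ≤ f s)
    (u : U) (hu : u ∈ S) (ε δ : ℝ) (hδ : 0 < δ) (hfu : f u ≤ m + ε) :
    ∃ w ∈ S, f w ≤ f u ∧ δ * ‖w - u‖ ≤ ε ∧ ∀ s ∈ S, f w ≤ f s + δ * ‖s - w‖ := by
  classical
  set T : U → Set U := fun a => {s | s ∈ S ∧ f s + δ * ‖s - a‖ ≤ f a} with hTdef
  have hTself : ∀ a ∈ S, a ∈ T a := fun a ha => ⟨ha, by simp⟩
  have hTsub : ∀ a, T a ⊆ S := fun a s hs => hs.1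
  have hTtrans : ∀ a b c, b ∈ T a → c ∈ T b → c ∈ T a := by
    rintro a b c ⟨hbS, hb⟩ ⟨hcS, hc⟩
    refine ⟨hcS, ?_⟩
    have h3 : ‖c - a‖ ≤ ‖c - b‖ + ‖b - a‖ := by
      simpa [dist_eq_norm] using dist_triangle c b a
    nlinarith [hδ.le]
  have hTclosed : ∀ a, IsClosed (T a) := by
    intro a
    have hga : LowerSemicontinuousOn (fun s => f s + δ * ‖s - a‖) S :=
      hlsc.add (((continuous_const.mul ((continuous_id.sub continuous_const).norm)).continuousOn).lowerSemicontinuousOn)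
    exact my_lsc_sublevel_closed hS hga (f a)
  have hbdd : ∀ a, BddBelow (f '' T a) := by
    intro a
    exact ⟨m, by rintro y ⟨s, hs, rfl⟩; exact hm s (hTsub a hs)⟩
  have hstep : ∀ (n : ℕ) (a : U), a ∈ S → ∃ b, b ∈ T a ∧ f b ≤ sInf (f '' T a) + (1/2)^n := by
    intro n a ha
    have hne : (f '' T a).Nonempty := ⟨f a, a, hTself a ha, rfl⟩
    obtain ⟨y, ⟨b, hb, rfl⟩, hy⟩ :=
      exists_lt_of_csInf_lt hne (lt_add_of_pos_right _ (pow_pos (by norm_num : (0:ℝ) < 1/2) n))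
    exact ⟨b, hb, hy.le⟩
  choose! step hstep1 hstep2 using hstep
  set seq : ℕ → U := fun n => Nat.rec u (fun n a => step n a) n with hseqdef
  have hseqS : ∀ n, seq n ∈ S := by
    intro n; induction n with
    | zero => exact hu
    | succ n ih => exact hTsub _ (hstep1 n _ ih)
  have hseqT : ∀ n, seq (n+1) ∈ T (seq n) := fun n => hstep1 n _ (hseqS n)
  have hseqInf : ∀ n, f (seq (n+1)) ≤ sInf (f '' T (seq n)) + (1/2)^n := fun n => hstep2 n _ (hseqS n)
  have hmono : ∀ n k, seq (n + k) ∈ T (seq n) := by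
    intro n k; induction k with
    | zero => exact hTself _ (hseqS n)
    | succ k ih => exact hTtrans _ _ _ ih (hseqT (n+k))
  have hmono' : ∀ n k, n ≤ k → seq k ∈ T (seq n) := by
    intro n k hnk
    obtain ⟨j, rfl⟩ := Nat.exists_eq_add_of_le hnk
    exact hmono n j
  have hanti : Antitone (fun n => f (seq n)) := by
    apply antitone_nat_of_succ_le
    intro n
    have := (hseqT n).2
    nlinarith [norm_nonneg (seq (n+1) - seq n), hδ.le]
  have hbdd' : BddBelow (Set.range fun n => f (seq n)) := by
    refine ⟨m, ?_⟩; rintro y ⟨n, rfl⟩; exact hm _ (hseqS n)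
  set L := ⨅ n, f (seq n) with hLdef
  have htendL : Tendsto (fun n => f (seq n)) atTop (𝓝 L) := tendsto_atTop_ciInf hanti hbdd'
  have hLle : ∀ n, L ≤ f (seq n) := fun n => ciInf_le hbdd' n
  have hcauchy : CauchySeq seq := by
    apply cauchySeq_of_le_tendsto_0 (fun N => (f (seq N) - L) / δ)
    · intro n k N hn hk
      wlog hnk : n ≤ k generalizing n k
      · rw [dist_comm]; exact this k n hk hn (le_of_not_ge hnk)
      have hT := (hmono' n k hnk).2
      have h1 : δ * ‖seq k - seq n‖ ≤ f (seq n) - f (seq k) := by linarith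
      have h2 : f (seq n) ≤ f (seq N) := hanti hn
      have h3 : L ≤ f (seq k) := hLle k
      rw [dist_eq_norm, norm_sub_rev, le_div_iff₀ hδ]
      nlinarith
    · have : Tendsto (fun N => f (seq N) - L) atTop (𝓝 0) := by
        simpa using htendL.sub_const L
      simpa using this.div_const δ
  obtain ⟨w, hw⟩ := cauchySeq_tendsto_of_complete hcauchy
  have hwT : ∀ n, w ∈ T (seq n) := by
    intro n
    exact (hTclosed (seq n)).mem_of_tendsto hw
      (eventually_atTop.2 ⟨n, fun k hk => hmono' n k hk⟩)
  have hwS : w ∈ S := hTsub _ (hwT 0)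
  have hseq0 : seq 0 = u := rfl
  have hfw_le : f w ≤ f u := by
    have := (hwT 0).2; rw [hseq0] at this
    nlinarith [norm_nonneg (w - u), hδ.le]
  refine ⟨w, hwS, hfw_le, ?_, ?_⟩
  · have := (hwT 0).2; rw [hseq0] at this
    have hmw : m ≤ f w := hm w hwS
    linarith
  · intro s hsS
    by_cases hsT : s ∈ T w
    · have h1 : ∀ n : ℕ, f w ≤ f s + (1/2)^n := by
        intro n
        have hsTn : s ∈ T (seq n) := hTtrans _ _ _ (hwT n) hsT
        have h2 : sInf (f '' T (seq n)) ≤ f s := csInf_le (hbdd _) ⟨s, hsTn, rfl⟩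
        have h3 : f w ≤ f (seq (n+1)) := by
          have := (hwT (n+1)).2
          nlinarith [norm_nonneg (w - seq (n+1)), hδ.le]
        have h4 := hseqInf n
        linarith
      have ht : Tendsto (fun n : ℕ => f s + (1/2:ℝ)^n) atTop (𝓝 (f s)) := by
        have := tendsto_pow_atTop_nhds_zero_of_lt_one (by norm_num : (0:ℝ) ≤ 1/2) (by norm_num)
        simpa using tendsto_const_nhds.add this
      have : f w ≤ f s := ge_of_tendsto ht (Eventually.of_forall h1)
      nlinarith [norm_nonneg (s - w), hδ.le]
    · have : ¬ (f s + δ * ‖s - w‖ ≤ f w) := fun h => hsT ⟨hsS, h⟩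
      linarith

set_option maxHeartbeats 1000000 in
/-- First-order variant of Ekeland's variational principle. -/
theorem stmt2_ekeland_first_order
    {U : Type*} [NormedAddCommGroup U] [NormedSpace ℝ U] [CompleteSpace U]
    (𝒰 : Set U) (hclosed : IsClosed 𝒰) (hconv : Convex ℝ 𝒰)
    (J : U → ℝ) (hlsc : LowerSemicontinuousOn J 𝒰)
    (J' : U → U →L[ℝ] ℝ)
    (hGateaux : ∀ u ∈ 𝒰, ∀ v : U, u + v ∈ 𝒰 →
      Tendsto (fun t : ℝ => (J (u + t • v) - J u) / t) (𝓝[>] 0) (𝓝 (J' u v)))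
    (ubar : U) (hubar : ubar ∈ 𝒰) (r : ℝ) (hr : 0 < r)
    (hmin : ∀ s ∈ 𝒰, ‖s - ubar‖ ≤ r → J ubar ≤ J s)
    (u : U) (hu : u ∈ 𝒰) (ε : ℝ) (hε : 0 < ε)
    (hur : ‖u - ubar‖ < r) (hJu : J u ≤ J ubar + ε) :
    ∀ lam : ℝ, 0 < lam → lam < r - ‖u - ubar‖ →
      ∃ uhat ∈ 𝒰, ∃ ρhat : U →L[ℝ] ℝ,
        ‖u - uhat‖ ≤ lam ∧ ‖ρhat‖ ≤ ε / lam ∧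
        ∀ v ∈ 𝒰, (ρhat (v - uhat) - J' uhat (v - uhat)) ≤ 0 := by
  intro lam hlam hlamr
  set δ : ℝ := ε / lam with hδdef
  have hδ : 0 < δ := div_pos hε hlam
  set S : Set U := {s | s ∈ 𝒰 ∧ ‖s - ubar‖ ≤ r} with hSdef
  have hSclosed : IsClosed S := by
    have : S = 𝒰 ∩ {s | ‖s - ubar‖ ≤ r} := rfl
    rw [this]
    exact hclosed.inter (isClosed_le ((continuous_id.sub continuous_const).norm) continuous_const)
  have hlscS : LowerSemicontinuousOn J S := hlsc.mono (fun s hs => hs.1)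
  have hmS : ∀ s ∈ S, J ubar ≤ J s := fun s hs => hmin s hs.1 hs.2
  have huS : u ∈ S := ⟨hu, hur.le⟩
  obtain ⟨uhat, hUhatS, hJUhat, hdist, hEk⟩ :=
    my_ekeland S hSclosed J hlscS (J ubar) hmS u huS ε δ hδ hJu
  have hdist' : ‖u - uhat‖ ≤ lam := by
    rw [norm_sub_rev]
    rw [hδdef] at hdist
    rw [div_mul_eq_mul_div, div_le_iff₀ hlam] at hdist
    calc ‖uhat - u‖ = (ε * ‖uhat - u‖) / ε := by field_simp
    _ ≤ (ε * lam) / ε := by gcongr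
    _ = lam := by field_simp
  have hball : ‖uhat - ubar‖ < r := by
    have h1 : ‖uhat - ubar‖ ≤ ‖uhat - u‖ + ‖u - ubar‖ := by
      simpa [dist_eq_norm] using dist_triangle uhat u ubar
    rw [norm_sub_rev] at hdist'
    linarith
  -- key first-order inequality
  have hkey : ∀ v ∈ 𝒰, -(δ * ‖v - uhat‖) ≤ J' uhat (v - uhat) := by
    intro v hv
    set w : U := v - uhat with hwdef
    have hvw : uhat + w ∈ 𝒰 := by
      have : uhat + w = v := by rw [hwdef]; abel
      rw [this]; exact hv
    have htend := hGateaux uhat hUhatS.1 w hvw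
    refine ge_of_tendsto htend ?_
    set t0 : ℝ := min 1 ((r - ‖uhat - ubar‖)/(‖w‖+1)) with ht0def
    have ht0 : 0 < t0 :=
      lt_min one_pos (div_pos (by linarith) (by positivity))
    filter_upwards [Ioo_mem_nhdsGT_of_mem (Set.mem_Ico.2 ⟨le_refl (0:ℝ), ht0⟩)] with t ht
    obtain ⟨htpos, htlt⟩ := ht
    have ht1 : t ≤ 1 := htlt.le.trans (min_le_left _ _)
    have hmem𝒰 : uhat + t • w ∈ 𝒰 := by
      have hc := hconv hUhatS.1 hv (by linarith : (0:ℝ) ≤ 1 - t) htpos.le (by ring)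
      have heq : uhat + t • w = (1-t) • uhat + t • v := by
        rw [hwdef, smul_sub]; module
      rw [heq]; exact hc
    have hmemball : ‖uhat + t • w - ubar‖ ≤ r := by
      have h1 : ‖uhat + t • w - ubar‖ ≤ ‖uhat - ubar‖ + t * ‖w‖ := by
        have : uhat + t • w - ubar = (uhat - ubar) + t • w := by abel
        rw [this]
        calc ‖(uhat - ubar) + t • w‖ ≤ ‖uhat - ubar‖ + ‖t • w‖ := norm_add_le _ _
        _ = ‖uhat - ubar‖ + t * ‖w‖ := by rw [norm_smul, Real.norm_eq_abs, abs_of_pos htpos]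
      have h2' : t ≤ (r - ‖uhat - ubar‖)/(‖w‖+1) := htlt.le.trans (min_le_right _ _)
      have h2 : t * (‖w‖+1) ≤ r - ‖uhat - ubar‖ := by
        rw [← le_div_iff₀ (by positivity : (0:ℝ) < ‖w‖+1)]
        exact h2'
      nlinarith [norm_nonneg w, htpos.le]
    have hEk' := hEk (uhat + t • w) ⟨hmem𝒰, hmemball⟩
    have hnorm : ‖uhat + t • w - uhat‖ = t * ‖w‖ := by
      have : uhat + t • w - uhat = t • w := by abel
      rw [this, norm_smul, Real.norm_eq_abs, abs_of_pos htpos]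
    rw [hnorm] at hEk'
    rw [le_div_iff₀ htpos]
    nlinarith
  -- Hahn-Banach step
  set A : U →L[ℝ] ℝ := J' uhat with hAdef
  set Sw : U → Set ℝ := fun x =>
    {y | ∃ t : ℝ, 0 ≤ t ∧ ∃ v ∈ 𝒰, y = t * A (v - uhat) + δ * ‖x - t • (v - uhat)‖}
    with hSwdef
  have hmem0 : ∀ x, δ * ‖x‖ ∈ Sw x := by
    intro x
    exact ⟨0, le_refl 0, uhat, hUhatS.1, by simp⟩
  have hne : ∀ x, (Sw x).Nonempty := fun x => ⟨δ * ‖x‖, hmem0 x⟩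
  have hlb : ∀ x, ∀ y ∈ Sw x, -(δ * ‖x‖) ≤ y := by
    rintro x y ⟨t, ht, v, hv, rfl⟩
    have h1 : -(δ * ‖v - uhat‖) ≤ A (v - uhat) := hkey v hv
    have h2 : ‖t • (v - uhat)‖ - ‖x‖ ≤ ‖x - t • (v - uhat)‖ := by
      rw [norm_sub_rev]; exact norm_sub_norm_le _ _
    have h3 : ‖t • (v - uhat)‖ = t * ‖v - uhat‖ := by
      rw [norm_smul, Real.norm_eq_abs, abs_of_nonneg ht]
    rw [h3] at h2
    nlinarith [mul_le_mul_of_nonneg_left h1 ht, hδ.le]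
  have hbddb : ∀ x, BddBelow (Sw x) := fun x => ⟨-(δ*‖x‖), fun y hy => hlb x y hy⟩
  set N : U → ℝ := fun x => sInf (Sw x) with hNdef
  have hNle : ∀ x, N x ≤ δ * ‖x‖ := fun x => csInf_le (hbddb x) (hmem0 x)
  have hNlb : ∀ x, -(δ * ‖x‖) ≤ N x := fun x => le_csInf (hne x) (hlb x)
  have hNelem : ∀ v ∈ 𝒰, N (v - uhat) ≤ A (v - uhat) := by
    intro v hv
    refine csInf_le (hbddb _) ⟨1, zero_le_one, v, hv, by simp⟩
  have hNhom_le : ∀ c : ℝ, 0 < c → ∀ x, N (c • x) ≤ c * N x := by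
    intro c hc x
    have step1 : ∀ y ∈ Sw x, N (c • x) ≤ c * y := by
      rintro y ⟨t, ht, v, hv, rfl⟩
      refine csInf_le (hbddb _) ⟨c*t, by positivity, v, hv, ?_⟩
      have : c • x - (c*t) • (v - uhat) = c • (x - t • (v - uhat)) := by
        module
      rw [this, norm_smul, Real.norm_eq_abs, abs_of_pos hc]; ring
    have step2 : N (c • x) / c ≤ N x := by
      refine le_csInf (hne x) fun y hy => ?_
      rw [div_le_iff₀ hc, mul_comm]
      exact step1 y hy
    rw [div_le_iff₀ hc] at step2
    linarith [step2]
  have hNhom : ∀ c : ℝ, 0 < c → ∀ x, N (c • x) = c * N x := by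
    intro c hc x
    refine le_antisymm (hNhom_le c hc x) ?_
    have h2 := hNhom_le c⁻¹ (by positivity) (c • x)
    rw [smul_smul, inv_mul_cancel₀ hc.ne', one_smul] at h2
    have h3 : c * N x ≤ c * (c⁻¹ * N (c • x)) := mul_le_mul_of_nonneg_left h2 hc.le
    rw [← mul_assoc, mul_inv_cancel₀ hc.ne', one_mul] at h3
    exact h3
  have hNadd : ∀ x y, N (x + y) ≤ N x + N y := by
    intro x y
    have core : ∀ y1 ∈ Sw x, ∀ y2 ∈ Sw y, N (x + y) ≤ y1 + y2 := by
      rintro _ ⟨t1, ht1, v1, hv1, rfl⟩ _ ⟨t2, ht2, v2, hv2, rfl⟩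
      by_cases hts : t1 + t2 = 0
      · have ht1z : t1 = 0 := by linarith
        have ht2z : t2 = 0 := by linarith
        subst ht1z; subst ht2z
        simp only [zero_mul, zero_smul, sub_zero, zero_add]
        calc N (x + y) ≤ δ * ‖x + y‖ := hNle _
        _ ≤ δ * (‖x‖ + ‖y‖) := by gcongr; exact norm_add_le x y
        _ = δ * ‖x‖ + δ * ‖y‖ := by ring
      · have hts' : 0 < t1 + t2 := lt_of_le_of_ne (by linarith) (Ne.symm hts)
        set v : U := (t1/(t1+t2)) • v1 + (t2/(t1+t2)) • v2 with hvdef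
        have hvmem : v ∈ 𝒰 := hconv hv1 hv2 (by positivity) (by positivity)
          (by field_simp)
        have hkeyid : (t1+t2) • (v - uhat) = t1 • (v1 - uhat) + t2 • (v2 - uhat) := by
          rw [hvdef]
          match_scalars <;> field_simp <;> ring
        have hAeq : (t1+t2) * A (v - uhat) = t1 * A (v1 - uhat) + t2 * A (v2 - uhat) := by
          have := congrArg A hkeyid
          simpa [map_add, map_smul, smul_eq_mul] using this
        refine (csInf_le (hbddb _) ⟨t1+t2, hts'.le, v, hvmem, rfl⟩).trans ?_
        have hnorm3 : ‖x + y - (t1+t2) • (v - uhat)‖ ≤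
            ‖x - t1 • (v1 - uhat)‖ + ‖y - t2 • (v2 - uhat)‖ := by
          calc ‖x + y - (t1+t2) • (v - uhat)‖
              = ‖(x - t1 • (v1 - uhat)) + (y - t2 • (v2 - uhat))‖ := by
                rw [hkeyid]; congr 1; abel
          _ ≤ _ := norm_add_le _ _
        have h5 := mul_le_mul_of_nonneg_left hnorm3 hδ.le
        linarith [hAeq]
    have core2 : ∀ y1 ∈ Sw x, N (x + y) - y1 ≤ N y := by
      intro y1 hy1
      refine le_csInf (hne y) fun y2 hy2 => by linarith [core y1 hy1 y2 hy2]
    have : N (x + y) - N y ≤ N x := by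
      refine le_csInf (hne x) fun y1 hy1 => by linarith [core2 y1 hy1]
    linarith
  obtain ⟨g, -, hg⟩ := exists_extension_of_le_sublinear ⟨⊥, 0⟩ N hNhom hNadd (fun x => by
    have hx0 : (x : U) = 0 := (Submodule.mem_bot ℝ).1 x.2
    have hN0 : (0:ℝ) ≤ N 0 := by simpa using hNlb 0
    simp only [hx0]
    simpa using hN0)
  have hgbound : ∀ x, ‖g x‖ ≤ δ * ‖x‖ := by
    intro x
    rw [Real.norm_eq_abs, abs_le]
    constructor
    · have h1 := (hg (-x)).trans (hNle (-x))
      simp only [map_neg, norm_neg] at h1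
      linarith
    · exact (hg x).trans (hNle x)
  set ρ : U →L[ℝ] ℝ := g.mkContinuous δ hgbound with hρdef
  refine ⟨uhat, hUhatS.1, ρ, hdist', ?_, ?_⟩
  · exact g.mkContinuous_norm_le hδ.le hgbound
  · intro v hv
    have h1 : ρ (v - uhat) = g (v - uhat) := rfl
    have h2 := (hg (v - uhat)).trans (hNelem v hv)
    rw [h1]
    simpa [hAdef] using sub_nonpos.2 h2
end

section
/- Sufficient condition for strong Hölder subregularity: Let U be a normed space, 𝒰 ⊆ U convex, J : 𝒰 → ℝ Gateaux differentiable, ū ∈ 𝒰 with 0 ∈ J'(ū) + N_𝒰(ū), and μ > 0. Suppose there exist δ, c > 0 such that J'(u)(u − ū) ≥ c‖u − ū‖^{μ+1} for all u ∈ 𝒰 with ‖u − ū‖ ≤ δ. Then there exist α, κ > 0 such that for all u ∈ 𝒰 and ρ ∈ U*, if ‖u − ū‖ ≤ α and ρ ∈ J'(u) + N_𝒰(u) then ‖u − ū‖ ≤ κ‖ρ‖_{U*}^{1/μ}. One may take α = δ and κ = c^{−1/μ}. -/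
open Filter Topology Real

/-- Sufficient condition for strong Hölder subregularity of the
optimality mapping `Φ_J(u) = J'(u) + N_𝒰(u)`. One may take `α = δ`, `κ = c^(-1/μ)`. -/
theorem stmt3_sufficient_subregularity
    {U : Type*} [NormedAddCommGroup U] [NormedSpace ℝ U]
    (𝒰 : Set U) (hconv : Convex ℝ 𝒰)
    (J' : U → U →L[ℝ] ℝ)
    (ubar : U) (hubar : ubar ∈ 𝒰)
    (hcrit : ∀ v ∈ 𝒰, 0 ≤ J' ubar (v - ubar))
    (μ : ℝ) (hμ : 0 < μ)
    (δ c : ℝ) (hδ : 0 < δ) (hc : 0 < c)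
    (hgrowth : ∀ u ∈ 𝒰, ‖u - ubar‖ ≤ δ → c * ‖u - ubar‖ ^ (μ + 1) ≤ J' u (u - ubar)) :
    ∃ α > (0:ℝ), ∃ κ > (0:ℝ), α = δ ∧ κ = c ^ (-(1 / μ)) ∧
      ∀ u ∈ 𝒰, ∀ ρ : U →L[ℝ] ℝ, ‖u - ubar‖ ≤ α →
        (∀ v ∈ 𝒰, ρ (v - u) - J' u (v - u) ≤ 0) →
        ‖u - ubar‖ ≤ κ * ‖ρ‖ ^ (1 / μ) := by
  refine ⟨δ, hδ, c ^ (-(1/μ)), Real.rpow_pos_of_pos hc _, rfl, rfl, ?_⟩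
  intro u hu ρ hle hρ
  set t := ‖u - ubar‖ with ht
  have htnn : 0 ≤ t := norm_nonneg _
  have hρnn : (0:ℝ) ≤ c ^ (-(1/μ)) * ‖ρ‖ ^ (1/μ) :=
    mul_nonneg (Real.rpow_pos_of_pos hc _).le (Real.rpow_nonneg (norm_nonneg _) _)
  rcases eq_or_lt_of_le htnn with h0 | htpos
  · rw [← h0]; exact hρnn
  -- main chain: c * t^(μ+1) ≤ J'(u)(u-ubar) ≤ ρ(u-ubar) ≤ ‖ρ‖ * t
  have h1 : c * t ^ (μ + 1) ≤ J' u (u - ubar) := hgrowth u hu hle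
  have h2 : J' u (u - ubar) ≤ ρ (u - ubar) := by
    have := hρ ubar hubar
    have e1 : ubar - u = -(u - ubar) := by abel
    rw [e1, map_neg, map_neg] at this
    linarith
  have h3 : ρ (u - ubar) ≤ ‖ρ‖ * t := by
    calc ρ (u - ubar) ≤ |ρ (u - ubar)| := le_abs_self _
    _ ≤ ‖ρ‖ * t := ρ.le_opNorm _
  have hkey : c * t ^ μ ≤ ‖ρ‖ := by
    have he : t ^ (μ + 1) = t ^ μ * t := by
      rw [Real.rpow_add htpos, Real.rpow_one]
    have : c * t ^ μ * t ≤ ‖ρ‖ * t := by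
      rw [mul_assoc, ← he]; linarith
    exact le_of_mul_le_mul_right this htpos
  have htμ : t ^ μ ≤ ‖ρ‖ / c := (le_div_iff₀' hc).2 hkey
  have hmono : (t ^ μ) ^ (1/μ) ≤ (‖ρ‖ / c) ^ (1/μ) :=
    Real.rpow_le_rpow (Real.rpow_nonneg htnn _) htμ (by positivity)
  have hl : (t ^ μ) ^ (1/μ) = t := by
    rw [← Real.rpow_mul htnn, mul_one_div, div_self hμ.ne', Real.rpow_one]
  have hr : (‖ρ‖ / c) ^ (1/μ) = c ^ (-(1/μ)) * ‖ρ‖ ^ (1/μ) := by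
    rw [Real.div_rpow (norm_nonneg _) hc.le, Real.rpow_neg hc.le, div_eq_mul_inv,
      mul_comm]
  rw [hl, hr] at hmono
  exact hmono
end

section
/- Necessary condition for strong Hölder subregularity: Let U be a Banach space, 𝒰 ⊆ U closed convex, J : 𝒰 → ℝ lower semicontinuous and Gateaux differentiable, ū ∈ 𝒰 a local minimizer of J, and μ > 0. If the optimality mapping Φ_J(u) = J'(u) + N_𝒰(u) is strongly Hölder subregular at ū with exponent 1/μ, then there exist δ, c > 0 such that J(u) − J(ū) ≥ c‖u − ū‖^{μ+1} for all u ∈ 𝒰 with ‖u − ū‖ ≤ δ. In particular one may take c = 2^{−(2μ+1)}κ^{−μ} where κ is the subregularity constant. -/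
open Filter Topology Real

private lemma ekeland_step {U : Type*} [NormedAddCommGroup U]
    (S : Set U) (f : U → ℝ) (m : ℝ) (hm : ∀ x ∈ S, m ≤ f x)
    (c : ℝ) (x : U) (hx : x ∈ S) :
    ∃ y ∈ S, f y + c * ‖x - y‖ ≤ f x ∧
      ∀ w ∈ S, f w + c * ‖x - w‖ ≤ f x → 2 * f y ≤ f x + f w := by
  set T : Set ℝ := f '' {w ∈ S | f w + c * ‖x - w‖ ≤ f x} with hT
  have hxT : f x ∈ T := ⟨x, ⟨hx, by simp⟩, rfl⟩
  have hbdd : BddBelow T := ⟨m, by rintro t ⟨w, ⟨hw, _⟩, rfl⟩; exact hm w hw⟩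
  have hile : sInf T ≤ f x := csInf_le hbdd hxT
  by_cases hc : sInf T < f x
  · have hlt : sInf T < (f x + sInf T) / 2 := by linarith
    obtain ⟨t, ⟨y, ⟨hyS, hyle⟩, rfl⟩, hty⟩ := exists_lt_of_csInf_lt ⟨f x, hxT⟩ hlt
    refine ⟨y, hyS, hyle, fun w hw hwle => ?_⟩
    have : sInf T ≤ f w := csInf_le hbdd ⟨w, ⟨hw, hwle⟩, rfl⟩
    linarith
  · push_neg at hc
    refine ⟨x, hx, by simp, fun w hw hwle => ?_⟩
    have : sInf T ≤ f w := csInf_le hbdd ⟨w, ⟨hw, hwle⟩, rfl⟩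
    linarith

private lemma ekeland {U : Type*} [NormedAddCommGroup U] [NormedSpace ℝ U] [CompleteSpace U]
    (S : Set U) (hS : IsClosed S) (f : U → ℝ) (hf : LowerSemicontinuousOn f S)
    (m : ℝ) (hm : ∀ x ∈ S, m ≤ f x) (c : ℝ) (hc : 0 < c)
    (x₀ : U) (hx₀ : x₀ ∈ S) :
    ∃ v ∈ S, c * ‖x₀ - v‖ ≤ f x₀ - f v ∧ ∀ w ∈ S, f v ≤ f w + c * ‖w - v‖ := by
  choose! next hnS hn1 hn2 using fun x (hx : x ∈ S) => ekeland_step S f m hm c x hx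
  set x : ℕ → U := fun n => next^[n] x₀ with hxdef
  have hsucc : ∀ n, x (n + 1) = next (x n) := fun n => Function.iterate_succ_apply' next n x₀
  have hx0 : x 0 = x₀ := rfl
  have hxS : ∀ n, x n ∈ S := by
    intro n; induction n with
    | zero => exact hx₀
    | succ n ih => rw [hsucc]; exact hnS _ ih
  have hstep1 : ∀ n, f (x (n + 1)) + c * ‖x n - x (n + 1)‖ ≤ f (x n) := by
    intro n; rw [hsucc]; exact hn1 _ (hxS n)
  have hstep2 : ∀ n, ∀ w ∈ S, f w + c * ‖x n - w‖ ≤ f (x n) →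
      2 * f (x (n + 1)) ≤ f (x n) + f w := by
    intro n; rw [hsucc]; exact hn2 _ (hxS n)
  have hmono : ∀ n, f (x (n + 1)) ≤ f (x n) := fun n => by
    have := hstep1 n
    nlinarith [norm_nonneg (x n - x (n + 1)), mul_nonneg hc.le (norm_nonneg (x n - x (n+1)))]
  have hanti : Antitone fun n => f (x n) := antitone_nat_of_succ_le hmono
  have htel : ∀ n m, n ≤ m → f (x m) + c * ‖x n - x m‖ ≤ f (x n) := by
    intro n m hnm
    induction m, hnm using Nat.le_induction with
    | base => simp
    | succ m hnm ih =>
      have h1 := hstep1 m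
      have h2 : ‖x n - x (m + 1)‖ ≤ ‖x n - x m‖ + ‖x m - x (m + 1)‖ := by
        simpa using norm_sub_le_norm_sub_add_norm_sub (x n) (x m) (x (m+1))
      nlinarith [mul_le_mul_of_nonneg_left h2 hc.le]
  have hbddr : BddBelow (Set.range fun n => f (x n)) := ⟨m, by rintro t ⟨n, rfl⟩; exact hm _ (hxS n)⟩
  set L : ℝ := ⨅ n, f (x n) with hLdef
  have htendL : Tendsto (fun n => f (x n)) atTop (𝓝 L) := tendsto_atTop_ciInf hanti hbddr
  have hLle : ∀ n, L ≤ f (x n) := fun n => ciInf_le hbddr n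
  have hcauchy : CauchySeq x := by
    apply cauchySeq_of_le_tendsto_0 (fun N => (f (x N) - L) / c)
    · intro n m N hn hm'
      rcases le_total n m with h | h
      · have := htel n m h
        rw [dist_eq_norm, le_div_iff₀ hc]
        nlinarith [hLle m, hanti hn]
      · have := htel m n h
        rw [dist_eq_norm, norm_sub_rev, le_div_iff₀ hc]
        nlinarith [hLle n, hanti hm']
    · have : Tendsto (fun N => (f (x N) - L) / c) atTop (𝓝 ((L - L) / c)) :=
        (htendL.sub tendsto_const_nhds).div_const c
      simpa using this
  obtain ⟨v, hv⟩ := cauchySeq_tendsto_of_complete hcauchy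
  have hvS : v ∈ S := hS.mem_of_tendsto hv (Eventually.of_forall hxS)
  have hvL : f v ≤ L := by
    by_contra h
    push_neg at h
    have hy : (L + f v) / 2 < f v := by linarith
    have hev := hf v hvS _ hy
    have hxv : Tendsto x atTop (𝓝[S] v) :=
      tendsto_nhdsWithin_of_tendsto_nhds_of_eventually_within x hv (Eventually.of_forall hxS)
    have hev2 : ∀ᶠ n in atTop, (L + f v) / 2 < f (x n) := hxv.eventually hev
    have : (L + f v) / 2 ≤ L := ge_of_tendsto htendL (hev2.mono fun n hn => hn.le)
    linarith
  have hkey : ∀ n, f v + c * ‖x n - v‖ ≤ f (x n) := by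
    intro n
    have htt : Tendsto (fun m => f (x m) + c * ‖x n - x m‖) atTop (𝓝 (L + c * ‖x n - v‖)) :=
      htendL.add (((tendsto_const_nhds.sub hv).norm).const_mul c)
    have : L + c * ‖x n - v‖ ≤ f (x n) :=
      le_of_tendsto htt (eventually_atTop.mpr ⟨n, fun m hm' => htel n m hm'⟩)
    linarith [hvL]
  refine ⟨v, hvS, by have := hkey 0; rw [hx0] at this; linarith, ?_⟩
  intro w hw
  by_contra h
  push_neg at h
  have hwT : ∀ n, f w + c * ‖x n - w‖ ≤ f (x n) := by
    intro n
    have h2 : ‖x n - w‖ ≤ ‖x n - v‖ + ‖w - v‖ := by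
      rw [norm_sub_rev w v]; simpa using norm_sub_le_norm_sub_add_norm_sub (x n) v w
    nlinarith [hkey n, mul_le_mul_of_nonneg_left h2 hc.le]
  have h2 : ∀ n, 2 * f (x (n + 1)) ≤ f (x n) + f w := fun n => hstep2 n w hw (hwT n)
  have hfvw : 0 < f v - f w := by
    nlinarith [mul_nonneg hc.le (norm_nonneg (w - v))]
  have hfvn : ∀ n, f v ≤ f (x n) := fun n => by
    nlinarith [hkey n, mul_nonneg hc.le (norm_nonneg (x n - v))]
  have hdecay : ∀ n, f (x n) - f w ≤ (f x₀ - f w) * (1/2) ^ n := by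
    intro n
    induction n with
    | zero => simp [hx0]
    | succ n ih =>
      have := h2 n
      rw [pow_succ]
      linarith
  have htz : Tendsto (fun n : ℕ => (f x₀ - f w) * (1/2)^n) atTop (𝓝 0) := by
    simpa using (tendsto_pow_atTop_nhds_zero_of_lt_one
      (by norm_num : (0:ℝ) ≤ 1/2) (by norm_num : (1:ℝ)/2 < 1)).const_mul (f x₀ - f w)
  obtain ⟨n, hn⟩ := (htz.eventually (gt_mem_nhds hfvw)).exists
  have := hdecay n
  have := hfvn n
  linarith

private lemma hb_cone {U : Type*} [NormedAddCommGroup U] [NormedSpace ℝ U]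
    (𝒰 : Set U) (hconv : Convex ℝ 𝒰) (hne : 𝒰.Nonempty)
    (v : U) (φ : U →L[ℝ] ℝ) (K : ℝ) (hK : 0 ≤ K)
    (hlow : ∀ z ∈ 𝒰, -(K * ‖z - v‖) ≤ φ (z - v)) :
    ∃ ρ : U →L[ℝ] ℝ, ‖ρ‖ ≤ K ∧ ∀ z ∈ 𝒰, ρ (z - v) - φ (z - v) ≤ 0 := by
  obtain ⟨z₀, hz₀⟩ := hne
  set C : Set U := {w | ∃ t : ℝ, 0 ≤ t ∧ ∃ z ∈ 𝒰, w = t • (z - v)} with hCdef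
  have h0C : (0 : U) ∈ C := ⟨0, le_rfl, z₀, hz₀, (zero_smul ℝ _).symm⟩
  have hlowC : ∀ w ∈ C, -(K * ‖w‖) ≤ φ w := by
    rintro w ⟨t, ht, z, hz, rfl⟩
    rw [map_smul, norm_smul, Real.norm_eq_abs, abs_of_nonneg ht, smul_eq_mul]
    have := mul_le_mul_of_nonneg_left (hlow z hz) ht
    nlinarith
  have hCadd : ∀ w₁ ∈ C, ∀ w₂ ∈ C, w₁ + w₂ ∈ C := by
    rintro w₁ ⟨t₁, ht₁, z₁, hz₁, rfl⟩ w₂ ⟨t₂, ht₂, z₂, hz₂, rfl⟩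
    rcases eq_or_lt_of_le (by positivity : (0:ℝ) ≤ t₁ + t₂) with hs | hs
    · have h1 : t₁ = 0 := by linarith
      have h2 : t₂ = 0 := by linarith
      simpa [h1, h2] using h0C
    · refine ⟨t₁ + t₂, hs.le, (t₁/(t₁+t₂)) • z₁ + (t₂/(t₁+t₂)) • z₂,
        hconv hz₁ hz₂ (by positivity) (by positivity) (by field_simp), ?_⟩
      match_scalars <;> field_simp <;> ring
  have hCsmul : ∀ a : ℝ, 0 ≤ a → ∀ w ∈ C, a • w ∈ C := by
    rintro a ha w ⟨t, ht, z, hz, rfl⟩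
    exact ⟨a * t, by positivity, z, hz, smul_smul a t _⟩
  set q : U → ℝ := fun w => sInf ((fun p => φ p + K * ‖w - p‖) '' C) with hqdef
  have hne_img : ∀ w, ((fun p => φ p + K * ‖w - p‖) '' C).Nonempty :=
    fun w => ⟨_, Set.mem_image_of_mem _ h0C⟩
  have hlb : ∀ w : U, ∀ s ∈ (fun p => φ p + K * ‖w - p‖) '' C, -(K * ‖w‖) ≤ s := by
    rintro w s ⟨p, hp, rfl⟩
    beta_reduce
    have h1 := hlowC p hp
    have h2 : ‖p‖ ≤ ‖w - p‖ + ‖w‖ := by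
      calc ‖p‖ = ‖w - (w - p)‖ := by rw [sub_sub_cancel]
        _ ≤ ‖w - p‖ + ‖w‖ := by rw [norm_sub_rev]; exact norm_sub_le _ _
    nlinarith [mul_le_mul_of_nonneg_left h2 hK]
  have hbdd : ∀ w : U, BddBelow ((fun p => φ p + K * ‖w - p‖) '' C) :=
    fun w => ⟨-(K * ‖w‖), hlb w⟩
  have hq_mem : ∀ w : U, ∀ p ∈ C, q w ≤ φ p + K * ‖w - p‖ :=
    fun w p hp => csInf_le (hbdd w) ⟨p, hp, rfl⟩
  have hq_le : ∀ w, q w ≤ K * ‖w‖ := fun w => by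
    have := hq_mem w 0 h0C
    simpa using this
  have hq_ge : ∀ w, -(K * ‖w‖) ≤ q w := fun w => le_csInf (hne_img w) (hlb w)
  have hq_hom : ∀ a : ℝ, 0 < a → ∀ w, q (a • w) = a * q w := by
    intro a ha w
    apply le_antisymm
    · have h1 : q (a • w) / a ≤ q w := by
        refine le_csInf (hne_img w) ?_
        rintro s ⟨p, hp, rfl⟩
        rw [div_le_iff₀ ha]
        calc q (a • w) ≤ φ (a • p) + K * ‖a • w - a • p‖ := hq_mem _ _ (hCsmul a ha.le p hp)
          _ = (φ p + K * ‖w - p‖) * a := by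
            rw [map_smul, smul_eq_mul, ← smul_sub, norm_smul, Real.norm_eq_abs,
              abs_of_pos ha]; ring
      calc q (a • w) = q (a • w) / a * a := by field_simp
        _ ≤ q w * a := mul_le_mul_of_nonneg_right h1 ha.le
        _ = a * q w := mul_comm _ _
    · refine le_csInf (hne_img _) ?_
      rintro s ⟨p, hp, rfl⟩
      have hp' : a⁻¹ • p ∈ C := hCsmul a⁻¹ (by positivity) p hp
      have h1 : q w ≤ φ (a⁻¹ • p) + K * ‖w - a⁻¹ • p‖ := hq_mem _ _ hp'
      have h2 : a * (φ (a⁻¹ • p) + K * ‖w - a⁻¹ • p‖) = φ p + K * ‖a • w - p‖ := by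
        rw [map_smul, smul_eq_mul]
        have h3 : ‖a • w - p‖ = a * ‖w - a⁻¹ • p‖ := by
          rw [show a • w - p = a • (w - a⁻¹ • p) by
            rw [smul_sub, smul_inv_smul₀ ha.ne'], norm_smul, Real.norm_eq_abs, abs_of_pos ha]
        rw [h3]
        field_simp
      beta_reduce
      rw [← h2]
      exact mul_le_mul_of_nonneg_left h1 ha.le
  have hq_add : ∀ w₁ w₂, q (w₁ + w₂) ≤ q w₁ + q w₂ := by
    intro w₁ w₂
    have key : ∀ s₁ ∈ (fun p => φ p + K * ‖w₁ - p‖) '' C,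
        ∀ s₂ ∈ (fun p => φ p + K * ‖w₂ - p‖) '' C, q (w₁ + w₂) ≤ s₁ + s₂ := by
      rintro s₁ ⟨p₁, hp₁, rfl⟩ s₂ ⟨p₂, hp₂, rfl⟩
      have h1 : q (w₁ + w₂) ≤ φ (p₁ + p₂) + K * ‖w₁ + w₂ - (p₁ + p₂)‖ :=
        hq_mem _ _ (hCadd p₁ hp₁ p₂ hp₂)
      have h2 : ‖w₁ + w₂ - (p₁ + p₂)‖ ≤ ‖w₁ - p₁‖ + ‖w₂ - p₂‖ := by
        calc ‖w₁ + w₂ - (p₁ + p₂)‖ = ‖(w₁ - p₁) + (w₂ - p₂)‖ := by abel_nf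
          _ ≤ _ := norm_add_le _ _
      have h3 := mul_le_mul_of_nonneg_left h2 hK
      beta_reduce
      rw [map_add] at h1
      linarith
    refine le_trans (le_of_eq (by ring : q (w₁ + w₂) = (q (w₁ + w₂) - q w₂) + q w₂)) ?_
    have h4 : q (w₁ + w₂) - q w₂ ≤ q w₁ := by
      refine le_csInf (hne_img w₁) ?_
      intro s₁ hs₁
      rw [sub_le_iff_le_add]
      have h5 : q (w₁ + w₂) - s₁ ≤ q w₂ := by
        refine le_csInf (hne_img w₂) ?_
        intro s₂ hs₂
        rw [sub_le_iff_le_add]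
        linarith [key s₁ hs₁ s₂ hs₂]
      linarith
    linarith
  obtain ⟨g, -, hg⟩ := exists_extension_of_le_sublinear ⟨⊥, 0⟩ q hq_hom hq_add
    (by
      rintro ⟨x, hx⟩
      have hx0 : x = 0 := by simpa using hx
      have : (0:ℝ) ≤ q 0 := by simpa using hq_ge 0
      simpa [hx0] using this)
  have hgnorm : ∀ w, ‖g w‖ ≤ K * ‖w‖ := by
    intro w
    rw [Real.norm_eq_abs, abs_le]
    constructor
    · have := (hg (-w)).trans (hq_le (-w))
      rw [map_neg, norm_neg] at this
      linarith
    · exact (hg w).trans (hq_le w)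
  refine ⟨g.mkContinuous K hgnorm, LinearMap.mkContinuous_norm_le g hK hgnorm, ?_⟩
  intro z hz
  have h1 : g (z - v) ≤ q (z - v) := hg _
  have h2 : q (z - v) ≤ φ (z - v) + K * ‖(z - v) - (z - v)‖ :=
    hq_mem _ _ ⟨1, zero_le_one, z, hz, (one_smul ℝ _).symm⟩
  simp only [sub_self, norm_zero, mul_zero, add_zero] at h2
  have : (g.mkContinuous K hgnorm) (z - v) = g (z - v) := rfl
  rw [this]
  linarith

/-- Necessary condition for strong Hölder subregularity: if the optimality
mapping is strongly Hölder subregular at a local minimizer `ubar` with exponent `1/μ`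
(constants `α, κ`), then `J` grows like `c‖u − ubar‖^(μ+1)` near `ubar`; one may take
`c = 2^{-(2μ+1)} κ^{-μ}`. -/
theorem stmt4_necessary_subregularity
    {U : Type*} [NormedAddCommGroup U] [NormedSpace ℝ U] [CompleteSpace U]
    (𝒰 : Set U) (hclosed : IsClosed 𝒰) (hconv : Convex ℝ 𝒰)
    (J : U → ℝ) (hlsc : LowerSemicontinuousOn J 𝒰)
    (J' : U → U →L[ℝ] ℝ)
    (hGateaux : ∀ u ∈ 𝒰, ∀ v : U, u + v ∈ 𝒰 →
      Tendsto (fun t : ℝ => (J (u + t • v) - J u) / t) (𝓝[>] 0) (𝓝 (J' u v)))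
    (ubar : U) (hubar : ubar ∈ 𝒰)
    (hmin : ∃ r > (0:ℝ), ∀ u ∈ 𝒰, ‖u - ubar‖ ≤ r → J ubar ≤ J u)
    (μ : ℝ) (hμ : 0 < μ)
    (α κ : ℝ) (hα : 0 < α) (hκ : 0 < κ)
    (hsubreg : ∀ u ∈ 𝒰, ∀ ρ : U →L[ℝ] ℝ, ‖u - ubar‖ ≤ α →
      (∀ v ∈ 𝒰, ρ (v - u) - J' u (v - u) ≤ 0) →
      ‖u - ubar‖ ≤ κ * ‖ρ‖ ^ (1 / μ)) :
    ∃ δ > (0:ℝ), ∀ u ∈ 𝒰, ‖u - ubar‖ ≤ δ →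
      (2:ℝ) ^ (-(2 * μ + 1)) * κ ^ (-μ) * ‖u - ubar‖ ^ (μ + 1) ≤ J u - J ubar := by
  obtain ⟨r₀, hr₀, hmin'⟩ := hmin
  refine ⟨min (2 * α / 3) (r₀ / 2), by positivity, ?_⟩
  intro u hu hur
  by_contra hcon
  push_neg at hcon
  set c₀ : ℝ := (2:ℝ) ^ (-(2 * μ + 1)) * κ ^ (-μ) with hc₀def
  have hc₀ : 0 < c₀ := mul_pos (Real.rpow_pos_of_pos two_pos _) (Real.rpow_pos_of_pos hκ _)
  set r : ℝ := ‖u - ubar‖ with hrdef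
  have hrδ1 : r ≤ 2 * α / 3 := hur.trans (min_le_left _ _)
  have hrδ2 : r ≤ r₀ / 2 := hur.trans (min_le_right _ _)
  rcases eq_or_lt_of_le (norm_nonneg (u - ubar)) with hr0 | hr0
  · have hre : r = 0 := by rw [hrdef, ← hr0]
    rw [hre, Real.zero_rpow (by positivity : (0:ℝ) < μ + 1).ne', mul_zero] at hcon
    have : J ubar ≤ J u := hmin' u hu (by rw [← hrdef, hre]; linarith)
    linarith
  · set ε : ℝ := c₀ * r ^ (μ + 1) with hεdef
    have hε : 0 < ε := mul_pos hc₀ (Real.rpow_pos_of_pos hr0 _)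
    set K : ℝ := 2 * ε / r with hKdef
    have hK : 0 < K := by positivity
    set S : Set U := 𝒰 ∩ Metric.closedBall ubar (2 * r) with hSdef
    have hS𝒰 : S ⊆ 𝒰 := Set.inter_subset_left
    have hmS : ∀ w ∈ S, J ubar ≤ J w := by
      rintro w ⟨hw𝒰, hwb⟩
      refine hmin' w hw𝒰 ?_
      have := Metric.mem_closedBall.mp hwb
      rw [← dist_eq_norm]
      linarith
    have hclosedS : IsClosed S := hclosed.inter Metric.isClosed_closedBall
    have huS : u ∈ S := ⟨hu, Metric.mem_closedBall.mpr (by rw [dist_eq_norm]; linarith)⟩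
    obtain ⟨v, hvS, hv0, hvmin⟩ := ekeland S hclosedS J (hlsc.mono hS𝒰) (J ubar) hmS K hK u huS
    have hKr : K * (r / 2) = ε := by rw [hKdef]; have hr : r ≠ 0 := hr0.ne'; field_simp
    have hvu : ‖u - v‖ ≤ r / 2 := by
      have h1 : J u - J v ≤ J u - J ubar := by linarith [hmS v hvS]
      have h2 : K * ‖u - v‖ < ε := lt_of_le_of_lt (hv0.trans h1) hcon
      nlinarith
    have hvub_lb : r / 2 ≤ ‖v - ubar‖ := by
      have : ‖u - ubar‖ ≤ ‖u - v‖ + ‖v - ubar‖ := by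
        simpa using norm_sub_le_norm_sub_add_norm_sub u v ubar
      rw [← hrdef] at this
      linarith
    have hvub_ub : ‖v - ubar‖ ≤ 3 * r / 2 := by
      have : ‖v - ubar‖ ≤ ‖v - u‖ + ‖u - ubar‖ := by
        simpa using norm_sub_le_norm_sub_add_norm_sub v u ubar
      rw [norm_sub_rev v u, ← hrdef] at this
      linarith
    have hvα : ‖v - ubar‖ ≤ α := by linarith
    have hv𝒰 : v ∈ 𝒰 := hvS.1
    -- Gateaux lower bound
    have hlow : ∀ z ∈ 𝒰, -(K * ‖z - v‖) ≤ J' v (z - v) := by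
      intro z hz
      set w : U := z - v with hwdef
      have hvz : v + w ∈ 𝒰 := by rwa [hwdef, add_sub_cancel]
      have htend := hGateaux v hv𝒰 w hvz
      set t₀ : ℝ := min 1 (r / (2 * (‖w‖ + 1))) with ht₀def
      have ht₀ : 0 < t₀ := lt_min one_pos (by positivity)
      have hev : ∀ᶠ t in 𝓝[>] (0:ℝ), -(K * ‖w‖) ≤ (J (v + t • w) - J v) / t := by
        filter_upwards [Ioc_mem_nhdsGT_of_mem ⟨le_refl (0:ℝ), ht₀⟩] with t ht
        have htpos : 0 < t := ht.1
        have ht1 : t ≤ 1 := ht.2.trans (min_le_left _ _)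
        have htr : t * ‖w‖ ≤ r / 2 := by
          have hw1 : (0:ℝ) < ‖w‖ + 1 := by positivity
          have h2 : t ≤ r / (2 * (‖w‖ + 1)) := ht.2.trans (min_le_right _ _)
          have h3 : t * ‖w‖ ≤ (r / (2 * (‖w‖ + 1))) * ‖w‖ :=
            mul_le_mul_of_nonneg_right h2 (norm_nonneg w)
          have h4 : (r / (2 * (‖w‖ + 1))) * ‖w‖ ≤ r / 2 := by
            rw [div_mul_eq_mul_div, div_le_div_iff₀ (by positivity) two_pos]
            nlinarith [norm_nonneg w, hr0.le]
          linarith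
        have hmem : v + t • w ∈ S := by
          constructor
          · have := hconv hv𝒰 hz (by linarith : (0:ℝ) ≤ 1 - t) htpos.le (by ring)
            have heq : (1 - t) • v + t • z = v + t • w := by
              rw [hwdef, smul_sub, sub_smul, one_smul]; abel
            rwa [heq] at this
          · rw [Metric.mem_closedBall, dist_eq_norm]
            have h5 : ‖v + t • w - ubar‖ ≤ ‖v - ubar‖ + ‖t • w‖ := by
              calc ‖v + t • w - ubar‖ = ‖(v - ubar) + t • w‖ := by abel_nf
                _ ≤ _ := norm_add_le _ _
            have h6 : ‖t • w‖ = t * ‖w‖ := by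
              rw [norm_smul, Real.norm_eq_abs, abs_of_pos htpos]
            linarith
        have h7 := hvmin _ hmem
        have h8 : ‖v + t • w - v‖ = t * ‖w‖ := by
          rw [add_sub_cancel_left, norm_smul, Real.norm_eq_abs, abs_of_pos htpos]
        rw [h8] at h7
        rw [le_div_iff₀ htpos]
        nlinarith
      exact ge_of_tendsto htend hev
    obtain ⟨ρ, hρnorm, hρcond⟩ := hb_cone 𝒰 hconv ⟨ubar, hubar⟩ v (J' v) K hK.le hlow
    have hsub := hsubreg v hv𝒰 ρ hvα hρcond
    have h1 : r / 2 ≤ κ * K ^ (1 / μ) := by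
      refine hvub_lb.trans (hsub.trans ?_)
      exact mul_le_mul_of_nonneg_left
        (Real.rpow_le_rpow (norm_nonneg ρ) hρnorm (by positivity)) hκ.le
    have h2 : (r / 2) ^ μ ≤ (κ * K ^ (1 / μ)) ^ μ :=
      Real.rpow_le_rpow (by positivity) h1 hμ.le
    have h3 : (κ * K ^ (1 / μ)) ^ μ = κ ^ μ * K := by
      rw [Real.mul_rpow hκ.le (Real.rpow_nonneg hK.le _), ← Real.rpow_mul hK.le,
        one_div_mul_cancel hμ.ne', Real.rpow_one]
    have hKval : K = 2 * c₀ * r ^ μ := by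
      have hra : r ^ (μ + 1) = r ^ μ * r := by
        rw [Real.rpow_add hr0, Real.rpow_one]
      rw [hKdef, hεdef, hra]
      have hr : r ≠ 0 := hr0.ne'
      field_simp
    have hl : (r / 2) ^ μ = 2 ^ (-μ) * r ^ μ := by
      rw [div_eq_mul_inv, Real.mul_rpow hr0.le (by positivity),
        Real.inv_rpow (by norm_num : (0:ℝ) ≤ 2), ← Real.rpow_neg (by norm_num : (0:ℝ) ≤ 2)]
      ring
    have hr2 : κ ^ μ * K = 2 ^ (-(2*μ)) * r ^ μ := by
      rw [hKval, hc₀def]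
      have hκμ : κ ^ μ * κ ^ (-μ) = 1 := by
        rw [← Real.rpow_add hκ]; simp
      have h2μ : (2:ℝ) * 2 ^ (-(2*μ+1)) = 2 ^ (-(2*μ)) := by
        nth_rewrite 1 [show (2:ℝ) = 2 ^ (1:ℝ) by rw [Real.rpow_one]]
        rw [← Real.rpow_add two_pos]
        ring_nf
      calc κ ^ μ * (2 * (2 ^ (-(2*μ+1)) * κ ^ (-μ)) * r ^ μ)
          = (κ ^ μ * κ ^ (-μ)) * ((2 * 2 ^ (-(2*μ+1))) * r ^ μ) := by ring
        _ = 2 ^ (-(2*μ)) * r ^ μ := by rw [hκμ, h2μ]; ring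
    have hrμ : 0 < r ^ μ := Real.rpow_pos_of_pos hr0 _
    have h6 : (2:ℝ) ^ (-μ) * r ^ μ ≤ 2 ^ (-(2*μ)) * r ^ μ := by
      rw [← hl, ← hr2, ← h3]; exact h2
    have h4 : (2:ℝ) ^ (-μ) ≤ 2 ^ (-(2*μ)) := le_of_mul_le_mul_right h6 hrμ
    have h5 : (2:ℝ) ^ (-(2*μ)) < 2 ^ (-μ) :=
      Real.rpow_lt_rpow_left_iff one_lt_two |>.mpr (by linarith)
    linarith
end

section
/- Let U be a normed space, 𝒰 convex, J : 𝒰 → ℝ twice Gateaux differentiable, ū ∈ 𝒰, μ ∈ [1,∞). If J has changing curvature of order μ at ū, then for all ε > 0 there exists δ > 0 such that |J(ū + v) − J(ū) − J'(ū)v − ½J''(ū)v²| ≤ ε‖v‖^{μ+1} for all v ∈ U with ū + v ∈ 𝒰 and ‖v‖ ≤ δ. -/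
open Filter Topology Real Set

lemma seg_hasDerivWithinAt {U : Type*} [NormedAddCommGroup U] [NormedSpace ℝ U]
    {𝒰 : Set U} (hconv : Convex ℝ 𝒰) (F : U → ℝ) (D : U → U →L[ℝ] ℝ)
    (hG : ∀ u ∈ 𝒰, ∀ w : U, u + w ∈ 𝒰 →
      Tendsto (fun t : ℝ => (F (u + t • w) - F u) / t) (𝓝[>] 0) (𝓝 (D u w)))
    {ubar v : U} (h0 : ubar ∈ 𝒰) (h1 : ubar + v ∈ 𝒰) :
    ∀ t ∈ Set.Icc (0:ℝ) 1,
      HasDerivWithinAt (fun s : ℝ => F (ubar + s • v)) (D (ubar + t • v) v) (Set.Icc 0 1) t := by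
  have hmem : ∀ s ∈ Set.Icc (0:ℝ) 1, ubar + s • v ∈ 𝒰 := by
    intro s hs
    have h := hconv (a := 1 - s) (b := s) h0 h1 (by linarith [hs.2]) hs.1 (by ring)
    have e : (1 - s) • ubar + s • (ubar + v) = ubar + s • v := by module
    rwa [e] at h
  have hR : ∀ t ∈ Set.Icc (0:ℝ) 1, t < 1 →
      HasDerivWithinAt (fun s : ℝ => F (ubar + s • v)) (D (ubar + t • v) v) (Set.Ici t) t := by
    intro t ht ht1
    have h1t : (0:ℝ) < 1 - t := by linarith
    have hu : ubar + t • v ∈ 𝒰 := hmem t ht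
    have hw : (ubar + t • v) + (1 - t) • v ∈ 𝒰 := by
      have e : (ubar + t • v) + (1 - t) • v = ubar + v := by module
      rwa [e]
    have hlim := hG _ hu ((1 - t) • v) hw
    rw [hasDerivWithinAt_iff_tendsto_slope, Set.Ici_sdiff_left]
    have hmap : Tendsto (fun y : ℝ => (y - t) / (1 - t)) (𝓝[Set.Ioi t] t) (𝓝[>] (0:ℝ)) := by
      apply tendsto_nhdsWithin_of_tendsto_nhds_of_eventually_within
      · have : Tendsto (fun y : ℝ => (y - t) / (1 - t)) (𝓝 t) (𝓝 ((t - t) / (1 - t))) :=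
          ((continuous_id.sub continuous_const).div_const _).tendsto t
        simpa using this.mono_left nhdsWithin_le_nhds
      · exact eventually_nhdsWithin_of_forall fun y hy =>
          div_pos (sub_pos.2 hy) h1t
    have hcomp := (hlim.comp hmap).const_mul ((1 - t)⁻¹)
    have hval : (1 - t)⁻¹ * (D (ubar + t • v) ((1 - t) • v)) = D (ubar + t • v) v := by
      rw [map_smul, smul_eq_mul, ← mul_assoc, inv_mul_cancel₀ h1t.ne', one_mul]
    rw [hval] at hcomp
    refine hcomp.congr' ?_
    filter_upwards [eventually_nhdsWithin_of_forall (fun y (hy : y ∈ Set.Ioi t) => hy)]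
      with y hy
    have hyt : (0:ℝ) < y - t := sub_pos.2 hy
    have evec : ubar + t • v + ((y - t) / (1 - t)) • ((1 - t) • v) = ubar + y • v := by
      rw [smul_smul, div_mul_cancel₀ _ h1t.ne']
      module
    show (1 - t)⁻¹ * ((F (ubar + t • v + ((y - t) / (1 - t)) • ((1 - t) • v))
        - F (ubar + t • v)) / ((y - t) / (1 - t))) = slope (fun s : ℝ => F (ubar + s • v)) t y
    rw [evec, slope_def_field]
    field_simp
  have hL : ∀ t ∈ Set.Icc (0:ℝ) 1, 0 < t →
      HasDerivWithinAt (fun s : ℝ => F (ubar + s • v)) (D (ubar + t • v) v) (Set.Iic t) t := by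
    intro t ht ht0
    have hu : ubar + t • v ∈ 𝒰 := hmem t ht
    have hw : (ubar + t • v) + (-(t • v)) ∈ 𝒰 := by
      have e : (ubar + t • v) + (-(t • v)) = ubar := by module
      rwa [e]
    have hlim := hG _ hu (-(t • v)) hw
    rw [hasDerivWithinAt_iff_tendsto_slope, Set.Iic_sdiff_right]
    have hmap : Tendsto (fun y : ℝ => (t - y) / t) (𝓝[Set.Iio t] t) (𝓝[>] (0:ℝ)) := by
      apply tendsto_nhdsWithin_of_tendsto_nhds_of_eventually_within
      · have : Tendsto (fun y : ℝ => (t - y) / t) (𝓝 t) (𝓝 ((t - t) / t)) :=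
          ((continuous_const.sub continuous_id).div_const _).tendsto t
        simpa using this.mono_left nhdsWithin_le_nhds
      · exact eventually_nhdsWithin_of_forall fun y hy =>
          div_pos (sub_pos.2 hy) ht0
    have hcomp := (hlim.comp hmap).const_mul (-(t⁻¹))
    have hval : -(t⁻¹) * (D (ubar + t • v) (-(t • v))) = D (ubar + t • v) v := by
      rw [map_neg, map_smul, smul_eq_mul]
      field_simp
    rw [hval] at hcomp
    refine hcomp.congr' ?_
    filter_upwards [eventually_nhdsWithin_of_forall (fun y (hy : y ∈ Set.Iio t) => hy)]
      with y hy
    have hyt : (0:ℝ) < t - y := sub_pos.2 hy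
    have evec : ubar + t • v + ((t - y) / t) • (-(t • v)) = ubar + y • v := by
      rw [smul_neg, smul_smul, div_mul_cancel₀ _ ht0.ne']
      module
    show -(t⁻¹) * ((F (ubar + t • v + ((t - y) / t) • (-(t • v)))
        - F (ubar + t • v)) / ((t - y) / t)) = slope (fun s : ℝ => F (ubar + s • v)) t y
    rw [evec, slope_def_field]
    rw [div_div_eq_mul_div]
    have h1 : y - t ≠ 0 := sub_ne_zero.2 (ne_of_lt hy)
    have h2 : t ≠ 0 := ht0.ne'
    field_simp
    ring
  intro t ht
  rcases eq_or_lt_of_le ht.1 with h0t | h0t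
  · exact (hR t ht (by rw [← h0t]; norm_num)).mono (by rw [← h0t]; exact Set.Icc_subset_Ici_self)
  rcases eq_or_lt_of_le ht.2 with h1t | h1t
  · exact (hL t ht h0t).mono (by rw [h1t]; exact Set.Icc_subset_Iic_self)
  · exact ((hR t ht h1t).union (hL t ht h0t)).mono (by intro x _; exact le_total t x |>.imp id id)

/-- Second-order Taylor estimate from changing curvature of order `μ`:
for all `ε > 0` there is `δ > 0` with
`|J(ubar+v) − J(ubar) − J'(ubar)v − ½J''(ubar)v²| ≤ ε‖v‖^{μ+1}`
for all `v` with `ubar + v ∈ 𝒰` and `‖v‖ ≤ δ`. -/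
theorem stmt5_taylor_estimate
    {U : Type*} [NormedAddCommGroup U] [NormedSpace ℝ U]
    (𝒰 : Set U) (hconv : Convex ℝ 𝒰)
    (J : U → ℝ) (J' : U → U →L[ℝ] ℝ) (J'' : U → U →L[ℝ] U →L[ℝ] ℝ)
    (hGateaux1 : ∀ u ∈ 𝒰, ∀ v : U, u + v ∈ 𝒰 →
      Tendsto (fun t : ℝ => (J (u + t • v) - J u) / t) (𝓝[>] 0) (𝓝 (J' u v)))
    (hGateaux2 : ∀ u ∈ 𝒰, ∀ v w : U, u + w ∈ 𝒰 →
      Tendsto (fun t : ℝ => (J' (u + t • w) v - J' u v) / t) (𝓝[>] 0) (𝓝 (J'' u v w)))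
    (ubar : U) (hubar : ubar ∈ 𝒰) (μ : ℝ) (hμ : 1 ≤ μ)
    (hcurv : ∀ ε > (0:ℝ), ∃ δ > (0:ℝ), ∀ v : U, ubar + v ∈ 𝒰 → ‖v‖ ≤ δ →
      |J'' (ubar + v) v v - J'' ubar v v| ≤ ε * ‖v‖ ^ (μ + 1)) :
    ∀ ε > (0:ℝ), ∃ δ > (0:ℝ), ∀ v : U, ubar + v ∈ 𝒰 → ‖v‖ ≤ δ →
      |J (ubar + v) - J ubar - J' ubar v - (1 / 2) * J'' ubar v v| ≤ ε * ‖v‖ ^ (μ + 1) := by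
  intro ε hε
  obtain ⟨δ, hδ, hδbound⟩ := hcurv ε hε
  refine ⟨δ, hδ, fun v hv hvδ => ?_⟩
  set C : ℝ := ε * ‖v‖ ^ (μ + 1) with hCdef
  have hC : 0 ≤ C := by positivity
  set Q : ℝ := J'' ubar v v with hQdef
  have hmem : ∀ s ∈ Set.Icc (0:ℝ) 1, ubar + s • v ∈ 𝒰 := by
    intro s hs
    have h := hconv (a := 1 - s) (b := s) hubar hv (by linarith [hs.2]) hs.1 (by ring)
    have e : (1 - s) • ubar + s • (ubar + v) = ubar + s • v := by module
    rwa [e] at h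
  -- derivative of g
  have hg := seg_hasDerivWithinAt hconv J J' hGateaux1 hubar hv
  have hφ := seg_hasDerivWithinAt hconv (fun x => J' x v) (fun x => J'' x v)
    (fun u hu w hw => hGateaux2 u hu v w hw) hubar hv
  -- ψ and ψ'
  set g : ℝ → ℝ := fun s => J (ubar + s • v) with hgdef
  set φ : ℝ → ℝ := fun s => J' (ubar + s • v) v with hφdef
  set ψ : ℝ → ℝ := fun t => g t - g 0 - t * J' ubar v - t ^ 2 / 2 * Q with hψdef
  set ψ' : ℝ → ℝ := fun t => φ t - J' ubar v - t * Q with hψ'def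
  have hφ0 : φ 0 = J' ubar v := by simp [hφdef]
  have hψd : ∀ t ∈ Set.Icc (0:ℝ) 1, HasDerivWithinAt ψ (ψ' t) (Set.Icc 0 1) t := by
    intro t ht
    have h1 : HasDerivWithinAt (fun t : ℝ => t * J' ubar v) (J' ubar v) (Set.Icc 0 1) t := by
      simpa using (hasDerivAt_id t).mul_const (J' ubar v) |>.hasDerivWithinAt
    have h2 : HasDerivWithinAt (fun t : ℝ => t ^ 2 / 2 * Q) (t * Q) (Set.Icc 0 1) t := by
      have := ((hasDerivAt_pow 2 t).div_const 2).mul_const Q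
      simpa [mul_comm, mul_assoc, mul_div_assoc] using this.hasDerivWithinAt
    exact (((hg t ht).sub_const (g 0)).sub h1).sub h2
  have hψ'd : ∀ t ∈ Set.Icc (0:ℝ) 1,
      HasDerivWithinAt ψ' (J'' (ubar + t • v) v v - Q) (Set.Icc 0 1) t := by
    intro t ht
    have h2 : HasDerivWithinAt (fun t : ℝ => t * Q) Q (Set.Icc 0 1) t := by
      simpa using (hasDerivAt_id t).mul_const Q |>.hasDerivWithinAt
    exact (((hφ t ht).sub_const (J' ubar v)).sub h2)
  -- bound on second derivative
  have hbound2 : ∀ t ∈ Set.Ico (0:ℝ) 1, |J'' (ubar + t • v) v v - Q| ≤ C := by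
    intro t ht
    rcases eq_or_lt_of_le ht.1 with h0 | h0
    · simp [← h0, hQdef, hC]
    · have htv : ‖t • v‖ ≤ δ := by
        rw [norm_smul, Real.norm_eq_abs, abs_of_pos h0]
        calc t * ‖v‖ ≤ 1 * ‖v‖ := by
              apply mul_le_mul_of_nonneg_right (le_of_lt ht.2) (norm_nonneg v)
          _ ≤ δ := by simpa using hvδ
      have hb := hδbound (t • v) (hmem t ⟨ht.1, le_of_lt ht.2⟩) htv
      have e1 : J'' (ubar + t • v) (t • v) (t • v) = t ^ 2 * J'' (ubar + t • v) v v := by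
        simp [map_smul, smul_eq_mul]; ring
      have e2 : J'' ubar (t • v) (t • v) = t ^ 2 * Q := by
        simp [map_smul, smul_eq_mul, hQdef]; ring
      rw [e1, e2, ← mul_sub, abs_mul, abs_of_pos (by positivity : (0:ℝ) < t ^ 2)] at hb
      have e3 : ‖t • v‖ ^ (μ + 1) = t ^ (μ + 1) * ‖v‖ ^ (μ + 1) := by
        rw [norm_smul, Real.norm_eq_abs, abs_of_pos h0, Real.mul_rpow h0.le (norm_nonneg v)]
      rw [e3] at hb
      have e4 : t ^ (μ + 1) ≤ t ^ (2:ℝ) :=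
        Real.rpow_le_rpow_of_exponent_ge h0 (le_of_lt ht.2) (by linarith)
      have e5 : t ^ (2:ℝ) = t ^ 2 := by
        rw [show ((2:ℝ) = ((2:ℕ):ℝ)) by norm_num, Real.rpow_natCast]
      have : t ^ 2 * |J'' (ubar + t • v) v v - Q| ≤ t ^ 2 * C := by
        calc t ^ 2 * |J'' (ubar + t • v) v v - Q| ≤ ε * (t ^ (μ + 1) * ‖v‖ ^ (μ + 1)) := hb
          _ ≤ ε * (t ^ 2 * ‖v‖ ^ (μ + 1)) := by
              apply mul_le_mul_of_nonneg_left _ hε.le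
              apply mul_le_mul_of_nonneg_right _ (by positivity)
              rw [← e5]; exact e4
          _ = t ^ 2 * C := by rw [hCdef]; ring
      exact le_of_mul_le_mul_left this (by positivity)
  -- first mean value step
  have hMV1 := norm_image_sub_le_of_norm_deriv_le_segment' hψ'd hbound2
  have hψ'0 : ψ' 0 = 0 := by simp [hψ'def, hφ0]
  have hbound1 : ∀ t ∈ Set.Ico (0:ℝ) 1, ‖ψ' t‖ ≤ C * t := by
    intro t ht
    have := hMV1 t ⟨ht.1, le_of_lt ht.2⟩
    rwa [hψ'0, sub_zero, sub_zero] at this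
  -- second mean value step
  have hψ0 : ψ 0 = 0 := by simp [hψdef]
  have hcont : ContinuousOn ψ (Set.Icc 0 1) := fun t ht => (hψd t ht).continuousWithinAt
  have hψdIci : ∀ t ∈ Set.Ico (0:ℝ) 1, HasDerivWithinAt ψ (ψ' t) (Set.Ici t) t := fun t ht =>
    (hψd t (Set.Ico_subset_Icc_self ht)).mono_of_mem_nhdsWithin (Icc_mem_nhdsGE_of_mem ht)
  have hB : ∀ x : ℝ, HasDerivAt (fun t : ℝ => C / 2 * t ^ 2) (C * x) x := by
    intro x
    have h : HasDerivAt (fun t : ℝ => C / 2 * t ^ 2) (C / 2 * (2 * x ^ 1)) x :=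
      (hasDerivAt_pow 2 x).const_mul (C / 2)
    convert h using 1
    ring
  have hMV2 := image_norm_le_of_norm_deriv_right_le_deriv_boundary hcont hψdIci
    (by simpa [hψ0] using (by positivity : (0:ℝ) ≤ C / 2 * 0 ^ 2)) hB hbound1
  have hres := hMV2 (Set.right_mem_Icc.2 zero_le_one)
  have hψ1 : ψ 1 = J (ubar + v) - J ubar - J' ubar v - 1 / 2 * Q := by
    simp [hψdef, hgdef]
  rw [hψ1, Real.norm_eq_abs] at hres
  calc |J (ubar + v) - J ubar - J' ubar v - 1 / 2 * Q| ≤ C / 2 * 1 ^ 2 := hres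
    _ ≤ C := by linarith
end

section
/- Let U be a normed space, 𝒰 convex, J : 𝒰 → ℝ twice Gateaux differentiable, ū ∈ 𝒰, μ ∈ [1,∞). If J has changing curvature of order μ at ū, then for all ε > 0 there exists δ > 0 such that |J'(ū + v)v − J'(ū)v − J''(ū)v²| ≤ ε‖v‖^{μ+1} for all v ∈ U with ū + v ∈ 𝒰 and ‖v‖ ≤ δ. -/
open Filter Topology Real Set

/-- Auxiliary: a one-sided parametrized difference-quotient limit yields a slope limit. -/
private lemma slope_param_aux {φ : ℝ → ℝ} {s L a : ℝ} {S : Set ℝ} (ha : a ≠ 0)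
    (hS : ∀ y ∈ S, 0 < (y - s) / a)
    (H : Tendsto (fun t : ℝ => (φ (s + a * t) - φ s) / t) (𝓝[>] 0) (𝓝 L)) :
    Tendsto (slope φ s) (𝓝[S] s) (𝓝 (L / a)) := by
  have hmap : Tendsto (fun y : ℝ => (y - s) / a) (𝓝[S] s) (𝓝[>] 0) := by
    rw [tendsto_nhdsWithin_iff]
    constructor
    · have h1 : Tendsto (fun y : ℝ => (y - s) / a) (𝓝 s) (𝓝 ((s - s) / a)) :=
        ((continuous_id.sub continuous_const).div_const a).tendsto s
      simpa using h1.mono_left nhdsWithin_le_nhds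
    · filter_upwards [self_mem_nhdsWithin] with y hy using hS y hy
  have h2 := (H.comp hmap).div_const a
  refine h2.congr' ?_
  filter_upwards [self_mem_nhdsWithin] with y hy
  have h1 : 0 < (y - s) / a := hS y hy
  have h2' : y - s ≠ 0 := by
    intro h; rw [h] at h1; simp at h1
  have h3 : s + a * ((y - s) / a) = y := by field_simp; ring
  simp only [Function.comp]
  rw [h3, slope_def_field]
  field_simp

/-- First-derivative Taylor estimate from changing curvature of order `μ`:
for all `ε > 0` there is `δ > 0` with
`|J'(ubar+v)v − J'(ubar)v − J''(ubar)v²| ≤ ε‖v‖^{μ+1}`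
for all `v` with `ubar + v ∈ 𝒰` and `‖v‖ ≤ δ`. -/
theorem stmt6_derivative_taylor_estimate
    {U : Type*} [NormedAddCommGroup U] [NormedSpace ℝ U]
    (𝒰 : Set U) (hconv : Convex ℝ 𝒰)
    (J : U → ℝ) (J' : U → U →L[ℝ] ℝ) (J'' : U → U →L[ℝ] U →L[ℝ] ℝ)
    (hGateaux1 : ∀ u ∈ 𝒰, ∀ v : U, u + v ∈ 𝒰 →
      Tendsto (fun t : ℝ => (J (u + t • v) - J u) / t) (𝓝[>] 0) (𝓝 (J' u v)))
    (hGateaux2 : ∀ u ∈ 𝒰, ∀ v w : U, u + w ∈ 𝒰 →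
      Tendsto (fun t : ℝ => (J' (u + t • w) v - J' u v) / t) (𝓝[>] 0) (𝓝 (J'' u v w)))
    (ubar : U) (hubar : ubar ∈ 𝒰) (μ : ℝ) (hμ : 1 ≤ μ)
    (hcurv : ∀ ε > (0:ℝ), ∃ δ > (0:ℝ), ∀ v : U, ubar + v ∈ 𝒰 → ‖v‖ ≤ δ →
      |J'' (ubar + v) v v - J'' ubar v v| ≤ ε * ‖v‖ ^ (μ + 1)) :
    ∀ ε > (0:ℝ), ∃ δ > (0:ℝ), ∀ v : U, ubar + v ∈ 𝒰 → ‖v‖ ≤ δ →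
      |J' (ubar + v) v - J' ubar v - J'' ubar v v| ≤ ε * ‖v‖ ^ (μ + 1) := by
  intro ε hε
  obtain ⟨δ, hδpos, hδ⟩ := hcurv ε hε
  refine ⟨δ, hδpos, fun v hv hvδ => ?_⟩
  set φ : ℝ → ℝ := fun t => J' (ubar + t • v) v with hφ
  set d : ℝ → ℝ := fun t => J'' (ubar + t • v) v v with hd
  set c : ℝ := J'' ubar v v with hc
  set C : ℝ := ε * ‖v‖ ^ (μ + 1) with hC
  have hCpos : 0 ≤ C := by
    have := Real.rpow_nonneg (norm_nonneg v) (μ + 1)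
    positivity
  -- membership of the segment
  have hmem : ∀ s ∈ Icc (0:ℝ) 1, ubar + s • v ∈ 𝒰 := by
    intro s hs
    have h := hconv hubar hv (by linarith [hs.2] : (0:ℝ) ≤ 1 - s) hs.1 (by ring)
    have heq : (1 - s) • ubar + s • (ubar + v) = ubar + s • v := by module
    rwa [heq] at h
  -- right-sided derivative
  have hright : ∀ s ∈ Ico (0:ℝ) 1, HasDerivWithinAt φ (d s) (Ici s) s := by
    intro s hs
    have h1s : (0:ℝ) < 1 - s := by linarith [hs.2]
    have hu : ubar + s • v ∈ 𝒰 := hmem s ⟨hs.1, hs.2.le⟩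
    have huw : (ubar + s • v) + (1 - s) • v ∈ 𝒰 := by
      have heq : (ubar + s • v) + (1 - s) • v = ubar + v := by module
      rwa [heq]
    have H := hGateaux2 (ubar + s • v) hu v ((1 - s) • v) huw
    have HL : J'' (ubar + s • v) v ((1 - s) • v) = (1 - s) * d s := by
      rw [map_smul]; simp [hd, smul_eq_mul]
    rw [HL] at H
    have H' : Tendsto (fun t : ℝ => (φ (s + (1 - s) * t) - φ s) / t) (𝓝[>] 0)
        (𝓝 ((1 - s) * d s)) := by
      refine H.congr fun t => ?_
      have heq : (ubar + s • v) + t • ((1 - s) • v) = ubar + (s + (1 - s) * t) • v := by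
        module
      simp only [hφ, heq]
    rw [hasDerivWithinAt_iff_tendsto_slope, Set.Ici_sdiff_left]
    have := slope_param_aux (ne_of_gt h1s)
      (fun y (hy : y ∈ Ioi s) => div_pos (by simpa [sub_pos] using hy) h1s) H'
    rwa [mul_div_cancel_left₀ _ (ne_of_gt h1s)] at this
  -- left-sided derivative
  have hleft : ∀ s ∈ Ioc (0:ℝ) 1, HasDerivWithinAt φ (d s) (Iic s) s := by
    intro s hs
    have hs0 : (0:ℝ) < s := hs.1
    have hu : ubar + s • v ∈ 𝒰 := hmem s ⟨hs0.le, hs.2⟩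
    have huw : (ubar + s • v) + (-s) • v ∈ 𝒰 := by
      have heq : (ubar + s • v) + (-s) • v = ubar := by module
      rwa [heq]
    have H := hGateaux2 (ubar + s • v) hu v ((-s) • v) huw
    have HL : J'' (ubar + s • v) v ((-s) • v) = (-s) * d s := by
      rw [map_smul]; simp [hd, smul_eq_mul]
    rw [HL] at H
    have H' : Tendsto (fun t : ℝ => (φ (s + (-s) * t) - φ s) / t) (𝓝[>] 0)
        (𝓝 ((-s) * d s)) := by
      refine H.congr fun t => ?_
      have heq : (ubar + s • v) + t • ((-s) • v) = ubar + (s + (-s) * t) • v := by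
        module
      simp only [hφ, heq]
    rw [hasDerivWithinAt_iff_tendsto_slope, Set.Iic_sdiff_right]
    have hns : (-s : ℝ) ≠ 0 := neg_ne_zero.mpr (ne_of_gt hs0)
    have := slope_param_aux hns
      (fun y (hy : y ∈ Iio s) => by
        apply div_pos_of_neg_of_neg
        · simpa [sub_neg] using hy
        · linarith) H'
    rwa [mul_div_cancel_left₀ _ hns] at this
  -- two-sided within Icc
  have hder : ∀ s ∈ Icc (0:ℝ) 1, HasDerivWithinAt φ (d s) (Icc (0:ℝ) 1) s := by
    intro s hs
    rcases eq_or_lt_of_le hs.1 with h0 | h0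
    · exact (hright s ⟨hs.1, by rw [← h0]; exact one_pos⟩).mono
        (by rw [← h0]; exact Icc_subset_Ici_self)
    · rcases eq_or_lt_of_le hs.2 with h1 | h1
      · exact (hleft s ⟨h0, hs.2⟩).mono (by rw [h1]; exact Icc_subset_Iic_self)
      · exact ((hright s ⟨hs.1, h1⟩).union (hleft s ⟨h0, hs.2⟩)).mono
          (fun x _ => (le_total s x).imp (fun h => h) (fun h => h))
  -- bound on the derivative difference
  have hbound : ∀ s ∈ Ico (0:ℝ) 1, |d s - c| ≤ C := by
    intro s hs
    rcases eq_or_lt_of_le hs.1 with h0 | h0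
    · have : d s = c := by simp [hd, hc, ← h0]
      simp [this, hCpos]
    · have hsv : ubar + s • v ∈ 𝒰 := hmem s ⟨hs.1, hs.2.le⟩
      have hnsv : ‖s • v‖ = s * ‖v‖ := by
        rw [norm_smul, Real.norm_eq_abs, abs_of_pos h0]
      have hsmall : ‖s • v‖ ≤ δ := by
        rw [hnsv]
        calc s * ‖v‖ ≤ 1 * ‖v‖ := by
              apply mul_le_mul_of_nonneg_right hs.2.le (norm_nonneg v)
          _ = ‖v‖ := one_mul _
          _ ≤ δ := hvδ
      have key := hδ (s • v) hsv hsmall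
      have hLHS : J'' (ubar + s • v) (s • v) (s • v) - J'' ubar (s • v) (s • v)
          = s ^ 2 * (d s - c) := by
        simp only [map_smul, ContinuousLinearMap.smul_apply, smul_eq_mul, hd, hc]
        ring
      have hRHS : ‖s • v‖ ^ (μ + 1) = s ^ (μ + 1) * ‖v‖ ^ (μ + 1) := by
        rw [hnsv, Real.mul_rpow h0.le (norm_nonneg v)]
      have hsle : s ^ (μ + 1) ≤ s ^ 2 := by
        have h2 : s ^ (2:ℝ) = s ^ 2 := by
          rw [show (2:ℝ) = ((2:ℕ):ℝ) by norm_num, Real.rpow_natCast]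
        rw [← h2]
        exact Real.rpow_le_rpow_of_exponent_ge h0 hs.2.le (by linarith)
      rw [hLHS, hRHS] at key
      have habs : |s ^ 2 * (d s - c)| = s ^ 2 * |d s - c| := by
        rw [abs_mul, abs_of_pos (by positivity : (0:ℝ) < s ^ 2)]
      rw [habs] at key
      have key2 : s ^ 2 * |d s - c| ≤ s ^ 2 * C := by
        calc s ^ 2 * |d s - c| ≤ ε * (s ^ (μ + 1) * ‖v‖ ^ (μ + 1)) := key
          _ ≤ ε * (s ^ 2 * ‖v‖ ^ (μ + 1)) := by
              apply mul_le_mul_of_nonneg_left _ hε.le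
              exact mul_le_mul_of_nonneg_right hsle (Real.rpow_nonneg (norm_nonneg v) _)
          _ = s ^ 2 * C := by rw [hC]; ring
      exact le_of_mul_le_mul_left key2 (by positivity)
  -- mean value inequality for ψ t = φ t - t * c
  have hψ : ∀ s ∈ Icc (0:ℝ) 1,
      HasDerivWithinAt (fun t => φ t - t * c) (d s - c) (Icc (0:ℝ) 1) s := by
    intro s hs
    have h1 := (hasDerivWithinAt_id s (Icc (0:ℝ) 1)).mul_const c
    rw [one_mul] at h1
    exact (hder s hs).sub h1
  have hbound' : ∀ s ∈ Ico (0:ℝ) 1, ‖d s - c‖ ≤ C := by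
    intro s hs; rw [Real.norm_eq_abs]; exact hbound s hs
  have final := norm_image_sub_le_of_norm_deriv_le_segment_01' hψ hbound'
  have h1 : φ 1 = J' (ubar + v) v := by simp [hφ]
  have h0 : φ 0 = J' ubar v := by simp [hφ]
  rw [Real.norm_eq_abs] at final
  simp only [h1, h0, one_mul, mul_zero, zero_mul, sub_zero] at final
  calc |J' (ubar + v) v - J' ubar v - c| ≤ C := by
        convert final using 2; ring
    _ = ε * ‖v‖ ^ (μ + 1) := hC
end

section
/- Equivalence of function growth and quadratic-model growth: Let U be a normed space, 𝒰 convex, J : 𝒰 → ℝ twice Gateaux differentiable with changing curvature of order μ ∈ [1,∞) at ū ∈ 𝒰. Then the following are equivalent: (i) there exist α, c > 0 such that J(u) − J(ū) ≥ c‖u − ū‖^{μ+1} for all u ∈ 𝒰 with ‖u − ū‖ ≤ α; (ii) there exist α, c > 0 such that J'(ū)(u − ū) + ½J''(ū)(u − ū)² ≥ c‖u − ū‖^{μ+1} for all u ∈ 𝒰 with ‖u − ū‖ ≤ α. -/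
open Filter Topology Real Set

private lemma right_slope {φ : ℝ → ℝ} {t a d : ℝ} (ha : 0 < a)
    (h : Tendsto (fun s : ℝ => (φ (t + s * a) - φ t) / s) (𝓝[>] 0) (𝓝 d)) :
    HasDerivWithinAt φ (d / a) (Ici t) t := by
  rw [hasDerivWithinAt_iff_tendsto_slope, Set.Ici_sdiff_left]
  have hm : Tendsto (fun y : ℝ => (y - t) / a) (𝓝[>] t) (𝓝[>] (0:ℝ)) := by
    refine tendsto_nhdsWithin_of_tendsto_nhds_of_eventually_within _ ?_ ?_
    · have h0 : Tendsto (fun y : ℝ => (y - t) / a) (𝓝 t) (𝓝 ((t - t) / a)) :=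
        (tendsto_id.sub_const t).div_const a
      simpa using h0.mono_left nhdsWithin_le_nhds
    · filter_upwards [self_mem_nhdsWithin] with y hy
      exact div_pos (sub_pos.2 hy) ha
  refine ((h.comp hm).div_const a).congr' ?_
  filter_upwards [self_mem_nhdsWithin] with y hy
  have hyt : y - t ≠ 0 := sub_ne_zero.2 (ne_of_gt hy)
  have ha' : a ≠ 0 := ne_of_gt ha
  simp only [Function.comp, slope_def_field]
  rw [div_mul_cancel₀ _ ha']
  rw [show t + (y - t) = y by ring]
  field_simp

private lemma left_slope {φ : ℝ → ℝ} {t a d : ℝ} (ha : 0 < a)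
    (h : Tendsto (fun s : ℝ => (φ (t - s * a) - φ t) / s) (𝓝[>] 0) (𝓝 d)) :
    HasDerivWithinAt φ (-(d / a)) (Iic t) t := by
  rw [hasDerivWithinAt_iff_tendsto_slope, Set.Iic_diff_right]
  have hm : Tendsto (fun y : ℝ => (t - y) / a) (𝓝[<] t) (𝓝[>] (0:ℝ)) := by
    refine tendsto_nhdsWithin_of_tendsto_nhds_of_eventually_within _ ?_ ?_
    · have h0 : Tendsto (fun y : ℝ => (t - y) / a) (𝓝 t) (𝓝 ((t - t) / a)) :=
        (tendsto_const_nhds.sub tendsto_id).div_const a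
      simpa using h0.mono_left nhdsWithin_le_nhds
    · filter_upwards [self_mem_nhdsWithin] with y hy
      exact div_pos (sub_pos.2 hy) ha
  refine (((h.comp hm).div_const a).neg).congr' ?_
  filter_upwards [self_mem_nhdsWithin] with y hy
  have hyt : t - y ≠ 0 := sub_ne_zero.2 (ne_of_gt hy)
  have ha' : a ≠ 0 := ne_of_gt ha
  simp only [Function.comp, slope_def_field]
  rw [div_mul_cancel₀ _ ha']
  rw [show t - (t - y) = y by ring]
  have hyt2 : y - t ≠ 0 := sub_ne_zero.2 (ne_of_lt hy)
  field_simp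
  ring

private lemma line_deriv {U : Type*} [NormedAddCommGroup U] [NormedSpace ℝ U]
    {𝒰 : Set U} (hconv : Convex ℝ 𝒰) (f : U → ℝ) (g : U → U →L[ℝ] ℝ)
    (hG : ∀ u ∈ 𝒰, ∀ w : U, u + w ∈ 𝒰 →
      Tendsto (fun s : ℝ => (f (u + s • w) - f u) / s) (𝓝[>] 0) (𝓝 (g u w)))
    {ubar v : U} (h0 : ubar ∈ 𝒰) (h1 : ubar + v ∈ 𝒰) {t : ℝ} (ht : t ∈ Icc (0:ℝ) 1) :
    HasDerivWithinAt (fun s : ℝ => f (ubar + s • v)) (g (ubar + t • v) v) (Icc 0 1) t := by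
  have hmem : ∀ s ∈ Icc (0:ℝ) 1, ubar + s • v ∈ 𝒰 := by
    intro s hs
    have := hconv h0 h1 (by linarith [hs.2] : (0:ℝ) ≤ 1 - s) hs.1 (by ring)
    convert this using 1
    module
  set u := ubar + t • v with hu
  have humem : u ∈ 𝒰 := hmem t ht
  -- right derivative, for t < 1
  have hright : t < 1 → HasDerivWithinAt (fun s : ℝ => f (ubar + s • v)) (g u v) (Ici t) t := by
    intro ht1
    have ha : (0:ℝ) < 1 - t := by linarith
    have hw : u + (1 - t) • v ∈ 𝒰 := by
      rw [show u + (1 - t) • v = ubar + v by rw [hu]; module]; exact h1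
    have h := hG u humem ((1 - t) • v) hw
    have heq : (fun s : ℝ => (f (u + s • ((1 - t) • v)) - f u) / s)
        = fun s : ℝ => (f (ubar + (t + s * (1 - t)) • v) - f (ubar + t • v)) / s := by
      funext s
      have e1 : u + s • ((1 - t) • v) = ubar + (t + s * (1 - t)) • v := by rw [hu]; module
      rw [e1, hu]
    rw [heq] at h
    have := right_slope (φ := fun s : ℝ => f (ubar + s • v)) (a := 1 - t) (d := g u ((1 - t) • v)) ha h
    have hgl : g u ((1 - t) • v) / (1 - t) = g u v := by
      rw [map_smul, smul_eq_mul]; field_simp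
    rwa [hgl] at this
  -- left derivative, for 0 < t
  have hleft : 0 < t → HasDerivWithinAt (fun s : ℝ => f (ubar + s • v)) (g u v) (Iic t) t := by
    intro ht0
    have hw : u + (-t) • v ∈ 𝒰 := by
      rw [show u + (-t) • v = ubar by rw [hu]; module]; exact h0
    have h := hG u humem ((-t) • v) hw
    have heq : (fun s : ℝ => (f (u + s • ((-t) • v)) - f u) / s)
        = fun s : ℝ => (f (ubar + (t - s * t) • v) - f (ubar + t • v)) / s := by
      funext s
      have e1 : u + s • ((-t) • v) = ubar + (t - s * t) • v := by rw [hu]; module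
      rw [e1, hu]
    rw [heq] at h
    have := left_slope (φ := fun s : ℝ => f (ubar + s • v)) (a := t) (d := g u ((-t) • v)) ht0 h
    have hgl : -(g u ((-t) • v) / t) = g u v := by
      rw [map_smul, smul_eq_mul]; field_simp
    rwa [hgl] at this
  rcases eq_or_lt_of_le ht.1 with h0t | h0t
  · exact (hright (by rw [← h0t]; norm_num)).mono (by rw [← h0t]; exact Icc_subset_Ici_self)
  · rcases eq_or_lt_of_le ht.2 with ht1 | ht1
    · exact (hleft h0t).mono (by rw [ht1]; exact Icc_subset_Iic_self)
    · exact ((hleft h0t).union (hright ht1)).mono (by intro x _; exact le_total x t)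

private lemma taylor_est {U : Type*} [NormedAddCommGroup U] [NormedSpace ℝ U]
    {𝒰 : Set U} (hconv : Convex ℝ 𝒰)
    (J : U → ℝ) (J' : U → U →L[ℝ] ℝ) (J'' : U → U →L[ℝ] U →L[ℝ] ℝ)
    (hGateaux1 : ∀ u ∈ 𝒰, ∀ v : U, u + v ∈ 𝒰 →
      Tendsto (fun t : ℝ => (J (u + t • v) - J u) / t) (𝓝[>] 0) (𝓝 (J' u v)))
    (hGateaux2 : ∀ u ∈ 𝒰, ∀ v w : U, u + w ∈ 𝒰 →
      Tendsto (fun t : ℝ => (J' (u + t • w) v - J' u v) / t) (𝓝[>] 0) (𝓝 (J'' u v w)))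
    (ubar : U) (hubar : ubar ∈ 𝒰) (μ : ℝ) (hμ : 1 ≤ μ)
    (hcurv : ∀ ε > (0:ℝ), ∃ δ > (0:ℝ), ∀ v : U, ubar + v ∈ 𝒰 → ‖v‖ ≤ δ →
      |J'' (ubar + v) v v - J'' ubar v v| ≤ ε * ‖v‖ ^ (μ + 1)) :
    ∀ ε > (0:ℝ), ∃ δ > (0:ℝ), ∀ v : U, ubar + v ∈ 𝒰 → ‖v‖ ≤ δ →
      |J (ubar + v) - J ubar - J' ubar v - (1/2) * J'' ubar v v| ≤ ε * ‖v‖ ^ (μ + 1) := by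
  intro ε hε
  obtain ⟨δ, hδ, hδ'⟩ := hcurv ε hε
  refine ⟨δ, hδ, ?_⟩
  intro v hv hvδ
  set C := ε * ‖v‖ ^ (μ + 1) with hCdef
  have hC0 : 0 ≤ C := mul_nonneg hε.le (rpow_nonneg (norm_nonneg v) _)
  have hφ : ∀ t ∈ Icc (0:ℝ) 1, HasDerivWithinAt (fun s : ℝ => J (ubar + s • v))
      (J' (ubar + t • v) v) (Icc 0 1) t :=
    fun t ht => line_deriv hconv J J' hGateaux1 hubar hv ht
  have hψ : ∀ t ∈ Icc (0:ℝ) 1, HasDerivWithinAt (fun s : ℝ => J' (ubar + s • v) v)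
      (J'' (ubar + t • v) v v) (Icc 0 1) t :=
    fun t ht => line_deriv hconv (fun x => J' x v) (fun u => J'' u v)
      (fun u hu w hw => hGateaux2 u hu v w hw) hubar hv ht
  set B := J'' ubar v v with hBdef
  set c1 := J' ubar v with hc1def
  -- bound on the second derivative along the segment
  have hbound : ∀ s ∈ Icc (0:ℝ) 1, |J'' (ubar + s • v) v v - B| ≤ C := by
    intro s hs
    rcases eq_or_lt_of_le hs.1 with h0 | h0
    · rw [← h0]
      simp only [zero_smul, add_zero, ← hBdef, sub_self, abs_zero]
      exact hC0
    · have hmem : ubar + s • v ∈ 𝒰 := by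
        have := hconv hubar hv (by linarith [hs.2] : (0:ℝ) ≤ 1 - s) hs.1 (by ring)
        convert this using 1; module
      have hnorm : ‖s • v‖ ≤ δ := by
        rw [norm_smul, Real.norm_eq_abs, abs_of_pos h0]
        calc s * ‖v‖ ≤ 1 * ‖v‖ := mul_le_mul_of_nonneg_right hs.2 (norm_nonneg v)
        _ = ‖v‖ := one_mul _
        _ ≤ δ := hvδ
      have h2 := hδ' (s • v) hmem hnorm
      have e : ∀ x : U, J'' x (s • v) (s • v) = s^2 * J'' x v v := by
        intro x
        simp [map_smul, ContinuousLinearMap.smul_apply, smul_eq_mul]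
        ring
      rw [e, e] at h2
      have hLHS : |s^2 * J'' (ubar + s • v) v v - s^2 * B| = s^2 * |J'' (ubar + s • v) v v - B| := by
        rw [← mul_sub, abs_mul, abs_of_pos (pow_pos h0 2)]
      rw [hLHS] at h2
      have hs_pow : s ^ (μ + 1) = s ^ 2 * s ^ (μ - 1) := by
        rw [show μ + 1 = ((2:ℕ):ℝ) + (μ - 1) by push_cast; ring, Real.rpow_add h0,
          Real.rpow_natCast]
      have hRHS : ε * ‖s • v‖ ^ (μ + 1) = s ^ 2 * (ε * s ^ (μ - 1) * ‖v‖ ^ (μ + 1)) := by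
        rw [norm_smul, Real.norm_eq_abs, abs_of_pos h0,
          Real.mul_rpow h0.le (norm_nonneg v), hs_pow]
        ring
      rw [hRHS] at h2
      have h3 : |J'' (ubar + s • v) v v - B| ≤ ε * s ^ (μ - 1) * ‖v‖ ^ (μ + 1) :=
        le_of_mul_le_mul_left h2 (pow_pos h0 2)
      calc |J'' (ubar + s • v) v v - B| ≤ ε * s ^ (μ - 1) * ‖v‖ ^ (μ + 1) := h3
        _ ≤ ε * 1 * ‖v‖ ^ (μ + 1) := by
            apply mul_le_mul_of_nonneg_right _ (rpow_nonneg (norm_nonneg v) _)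
            exact mul_le_mul_of_nonneg_left
              (Real.rpow_le_one h0.le hs.2 (by linarith)) hε.le
        _ = C := by rw [hCdef]; ring
  -- first mean value estimate : bound on J' along the segment
  have hk : ∀ s ∈ Icc (0:ℝ) 1, |J' (ubar + s • v) v - c1 - s * B| ≤ C := by
    have hkd : ∀ s ∈ Icc (0:ℝ) 1, HasDerivWithinAt
        (fun s : ℝ => J' (ubar + s • v) v - c1 - s * B)
        (J'' (ubar + s • v) v v - B) (Icc 0 1) s := by
      intro s hs
      exact ((hψ s hs).sub_const c1).sub ((hasDerivAt_mul_const B).hasDerivWithinAt)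
    intro s hs
    have := Convex.norm_image_sub_le_of_norm_hasDerivWithin_le hkd
      (fun x hx => by rw [Real.norm_eq_abs]; exact hbound x hx)
      (convex_Icc 0 1) (by constructor <;> norm_num : (0:ℝ) ∈ Icc (0:ℝ) 1) hs
    simp only [zero_smul, add_zero, ← hc1def, sub_self, mul_zero, sub_zero, zero_mul,
      Real.norm_eq_abs] at this
    calc |J' (ubar + s • v) v - c1 - s * B| ≤ C * |s| := this
      _ ≤ C * 1 := by
          apply mul_le_mul_of_nonneg_left _ hC0
          rw [abs_of_nonneg hs.1]; exact hs.2
      _ = C := mul_one C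
  -- second mean value estimate
  have hhd : ∀ t ∈ Icc (0:ℝ) 1, HasDerivWithinAt
      (fun t : ℝ => J (ubar + t • v) - J ubar - t * c1 - t ^ 2 / 2 * B)
      (J' (ubar + t • v) v - c1 - t * B) (Icc 0 1) t := by
    intro t ht
    have hp : HasDerivAt (fun t : ℝ => t ^ 2 / 2 * B) (t * B) t := by
      have h1 := ((hasDerivAt_pow 2 t).div_const 2).mul_const B
      refine h1.congr_deriv ?_
      push_cast; ring
    exact (((hφ t ht).sub_const (J ubar)).sub
      ((hasDerivAt_mul_const c1).hasDerivWithinAt)).sub hp.hasDerivWithinAt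
  have hfin := Convex.norm_image_sub_le_of_norm_hasDerivWithin_le hhd
    (fun x hx => by rw [Real.norm_eq_abs]; exact hk x hx)
    (convex_Icc 0 1) (by constructor <;> norm_num : (0:ℝ) ∈ Icc (0:ℝ) 1)
    (by constructor <;> norm_num : (1:ℝ) ∈ Icc (0:ℝ) 1)
  simp only [one_smul, zero_smul, add_zero, one_pow, zero_pow, Real.norm_eq_abs] at hfin
  have : |J (ubar + v) - J ubar - c1 - 1 / 2 * B| ≤ C * 1 := by
    calc |J (ubar + v) - J ubar - c1 - 1 / 2 * B|
        = |J (ubar + v) - J ubar - 1 * c1 - 1 / 2 * B -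
            (J ubar - J ubar - 0 * c1 - 0 ^ 2 / 2 * B)| := by norm_num
      _ ≤ C * |1 - 0| := hfin
      _ = C * 1 := by norm_num
  rw [mul_one] at this
  exact this

/-- Equivalence of function growth and quadratic-model growth under
changing curvature of order `μ` at `ubar`. -/
theorem stmt7_growth_equivalence
    {U : Type*} [NormedAddCommGroup U] [NormedSpace ℝ U]
    (𝒰 : Set U) (hconv : Convex ℝ 𝒰)
    (J : U → ℝ) (J' : U → U →L[ℝ] ℝ) (J'' : U → U →L[ℝ] U →L[ℝ] ℝ)
    (hGateaux1 : ∀ u ∈ 𝒰, ∀ v : U, u + v ∈ 𝒰 →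
      Tendsto (fun t : ℝ => (J (u + t • v) - J u) / t) (𝓝[>] 0) (𝓝 (J' u v)))
    (hGateaux2 : ∀ u ∈ 𝒰, ∀ v w : U, u + w ∈ 𝒰 →
      Tendsto (fun t : ℝ => (J' (u + t • w) v - J' u v) / t) (𝓝[>] 0) (𝓝 (J'' u v w)))
    (ubar : U) (hubar : ubar ∈ 𝒰) (μ : ℝ) (hμ : 1 ≤ μ)
    (hcurv : ∀ ε > (0:ℝ), ∃ δ > (0:ℝ), ∀ v : U, ubar + v ∈ 𝒰 → ‖v‖ ≤ δ →
      |J'' (ubar + v) v v - J'' ubar v v| ≤ ε * ‖v‖ ^ (μ + 1)) :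
    (∃ α > (0:ℝ), ∃ c > (0:ℝ), ∀ u ∈ 𝒰, ‖u - ubar‖ ≤ α →
        c * ‖u - ubar‖ ^ (μ + 1) ≤ J u - J ubar) ↔
    (∃ α > (0:ℝ), ∃ c > (0:ℝ), ∀ u ∈ 𝒰, ‖u - ubar‖ ≤ α →
        c * ‖u - ubar‖ ^ (μ + 1) ≤
          J' ubar (u - ubar) + (1 / 2) * J'' ubar (u - ubar) (u - ubar)) := by
  have T := taylor_est hconv J J' J'' hGateaux1 hGateaux2 ubar hubar μ hμ hcurv
  constructor
  · rintro ⟨α, hα, c, hc, H⟩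
    obtain ⟨δ, hδ, hT⟩ := T (c / 2) (by linarith)
    refine ⟨min α δ, lt_min hα hδ, c / 2, by linarith, ?_⟩
    intro u hu hnorm
    have e : ubar + (u - ubar) = u := by abel
    have hv : ubar + (u - ubar) ∈ 𝒰 := by rw [e]; exact hu
    have h1 := hT (u - ubar) hv (hnorm.trans (min_le_right _ _))
    rw [e] at h1
    have h2 := H u hu (hnorm.trans (min_le_left _ _))
    obtain ⟨h1a, h1b⟩ := abs_le.1 h1
    linarith
  · rintro ⟨α, hα, c, hc, H⟩
    obtain ⟨δ, hδ, hT⟩ := T (c / 2) (by linarith)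
    refine ⟨min α δ, lt_min hα hδ, c / 2, by linarith, ?_⟩
    intro u hu hnorm
    have e : ubar + (u - ubar) = u := by abel
    have hv : ubar + (u - ubar) ∈ 𝒰 := by rw [e]; exact hu
    have h1 := hT (u - ubar) hv (hnorm.trans (min_le_right _ _))
    rw [e] at h1
    have h2 := H u hu (hnorm.trans (min_le_left _ _))
    obtain ⟨h1a, h1b⟩ := abs_le.1 h1
    linarith
end

section
/- Equivalence of derivative growth and linearized growth: Let U be a normed space, 𝒰 convex, J : 𝒰 → ℝ twice Gateaux differentiable with changing curvature of order μ ∈ [1,∞) at ū ∈ 𝒰. Then the following are equivalent: (i) there exist α, c > 0 such that J'(u)(u − ū) ≥ c‖u − ū‖^{μ+1} for all u ∈ 𝒰 with ‖u − ū‖ ≤ α; (ii) there exist α, c > 0 such that J'(ū)(u − ū) + J''(ū)(u − ū)² ≥ c‖u − ū‖^{μ+1} for all u ∈ 𝒰 with ‖u − ū‖ ≤ α. -/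
open Filter Topology Real Set

/-- Rescaling a right-sided difference quotient limit to a right slope limit. -/
lemma aux_slope_right {F : ℝ → ℝ} {x c L : ℝ} (hc : 0 < c)
    (h : Tendsto (fun s : ℝ => (F (x + s * c) - F x) / s) (𝓝[>] 0) (𝓝 (c * L))) :
    Tendsto (slope F x) (𝓝[>] x) (𝓝 L) := by
  have hφ : Tendsto (fun t : ℝ => (t - x) / c) (𝓝[>] x) (𝓝[>] (0:ℝ)) := by
    apply tendsto_nhdsWithin_of_tendsto_nhds_of_eventually_within
    · have : Tendsto (fun t : ℝ => (t - x) / c) (𝓝 x) (𝓝 ((x - x) / c)) :=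
        ((continuous_id.sub continuous_const).div_const c).tendsto x
      simpa using this.mono_left nhdsWithin_le_nhds
    · filter_upwards [self_mem_nhdsWithin] with t ht
      exact div_pos (sub_pos.2 ht) hc
  have h2 := h.comp hφ
  have heq : ∀ t ∈ Ioi x,
      ((fun s : ℝ => (F (x + s * c) - F x) / s) ∘ fun t => (t - x) / c) t
        = c * slope F x t := by
    intro t ht
    have htx : t - x ≠ 0 := sub_ne_zero.2 ((ne_of_gt ht))
    have harg : x + (t - x) / c * c = t := by field_simp; ring
    simp only [Function.comp, slope_def_field]
    rw [harg]
    field_simp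
  have h3 : Tendsto (fun t => c * slope F x t) (𝓝[>] x) (𝓝 (c * L)) :=
    h2.congr' (eventually_nhdsWithin_of_forall heq)
  have h4 := h3.const_mul c⁻¹
  simp only [← mul_assoc, inv_mul_cancel₀ hc.ne', one_mul] at h4
  exact h4

/-- Rescaling a difference quotient limit to a left slope limit. -/
lemma aux_slope_left {F : ℝ → ℝ} {x c L : ℝ} (hc : 0 < c)
    (h : Tendsto (fun s : ℝ => (F (x - s * c) - F x) / s) (𝓝[>] 0) (𝓝 (-(c * L)))) :
    Tendsto (slope F x) (𝓝[<] x) (𝓝 L) := by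
  have hφ : Tendsto (fun t : ℝ => (x - t) / c) (𝓝[<] x) (𝓝[>] (0:ℝ)) := by
    apply tendsto_nhdsWithin_of_tendsto_nhds_of_eventually_within
    · have : Tendsto (fun t : ℝ => (x - t) / c) (𝓝 x) (𝓝 ((x - x) / c)) :=
        ((continuous_const.sub continuous_id).div_const c).tendsto x
      simpa using this.mono_left nhdsWithin_le_nhds
    · filter_upwards [self_mem_nhdsWithin] with t ht
      exact div_pos (sub_pos.2 ht) hc
  have h2 := h.comp hφ
  have heq : ∀ t ∈ Iio x,
      ((fun s : ℝ => (F (x - s * c) - F x) / s) ∘ fun t => (x - t) / c) t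
        = -(c * slope F x t) := by
    intro t ht
    have htx : t - x ≠ 0 := sub_ne_zero.2 (ne_of_lt ht)
    have hxt : x - t ≠ 0 := sub_ne_zero.2 (ne_of_gt ht)
    have harg : x - (x - t) / c * c = t := by field_simp; ring
    simp only [Function.comp, slope_def_field]
    rw [harg]
    field_simp
    ring
  have h3 : Tendsto (fun t => -(c * slope F x t)) (𝓝[<] x) (𝓝 (-(c * L))) :=
    h2.congr' (eventually_nhdsWithin_of_forall heq)
  have h4 := (h3.neg).const_mul c⁻¹
  simp only [neg_neg, ← mul_assoc, inv_mul_cancel₀ hc.ne', one_mul] at h4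
  exact h4

/-- First-derivative Taylor estimate from changing curvature. -/
lemma aux_taylor
    {U : Type*} [NormedAddCommGroup U] [NormedSpace ℝ U]
    (𝒰 : Set U) (hconv : Convex ℝ 𝒰)
    (J' : U → U →L[ℝ] ℝ) (J'' : U → U →L[ℝ] U →L[ℝ] ℝ)
    (hGateaux2 : ∀ u ∈ 𝒰, ∀ v w : U, u + w ∈ 𝒰 →
      Tendsto (fun t : ℝ => (J' (u + t • w) v - J' u v) / t) (𝓝[>] 0) (𝓝 (J'' u v w)))
    (ubar : U) (hubar : ubar ∈ 𝒰) (μ : ℝ) (hμ : 1 ≤ μ)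
    (hcurv : ∀ ε > (0:ℝ), ∃ δ > (0:ℝ), ∀ v : U, ubar + v ∈ 𝒰 → ‖v‖ ≤ δ →
      |J'' (ubar + v) v v - J'' ubar v v| ≤ ε * ‖v‖ ^ (μ + 1)) :
    ∀ ε > (0:ℝ), ∃ δ > (0:ℝ), ∀ v : U, ubar + v ∈ 𝒰 → ‖v‖ ≤ δ →
      |J' (ubar + v) v - J' ubar v - J'' ubar v v| ≤ ε * ‖v‖ ^ (μ + 1) := by
  intro ε hε
  obtain ⟨δ, hδ, hbound⟩ := hcurv ε hε
  refine ⟨δ, hδ, ?_⟩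
  intro v hv hvδ
  set g : ℝ → ℝ := fun t => J' (ubar + t • v) v with hg
  set B : ℝ → ℝ := fun x => J'' (ubar + x • v) v v with hB
  have hC : (0:ℝ) ≤ ε * ‖v‖ ^ (μ + 1) :=
    mul_nonneg hε.le (rpow_nonneg (norm_nonneg v) _)
  -- membership along the segment
  have hmem : ∀ x ∈ Icc (0:ℝ) 1, ubar + x • v ∈ 𝒰 := by
    intro x hx
    have := hconv hubar hv (by linarith [hx.2] : (0:ℝ) ≤ 1 - x) hx.1 (by ring)
    have he : (1 - x) • ubar + x • (ubar + v) = ubar + x • v := by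
      rw [smul_add]; module
    rwa [he] at this
  -- right derivative on [0,1)
  have hright : ∀ x ∈ Ico (0:ℝ) 1, HasDerivWithinAt g (B x) (Ici x) x := by
    intro x hx
    rw [hasDerivWithinAt_iff_tendsto_slope, Ici_sdiff_left]
    apply aux_slope_right (c := 1 - x) (by linarith [hx.2])
    have hmx : ubar + x • v ∈ 𝒰 := hmem x ⟨hx.1, hx.2.le⟩
    have hw : ubar + x • v + (1 - x) • v ∈ 𝒰 := by
      have he : ubar + x • v + (1 - x) • v = ubar + v := by module
      rwa [he]
    have h0 := hGateaux2 (ubar + x • v) hmx v ((1 - x) • v) hw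
    have hlv : J'' (ubar + x • v) v ((1 - x) • v) = (1 - x) * B x := by
      rw [map_smul]; simp [hB]
    rw [hlv] at h0
    refine h0.congr fun s => ?_
    have he : ubar + x • v + s • (1 - x) • v = ubar + (x + s * (1 - x)) • v := by
      rw [smul_smul, add_smul]; module
    simp only [hg, he]
  -- left derivative on (0,1]
  have hleft : ∀ x ∈ Ioc (0:ℝ) 1, HasDerivWithinAt g (B x) (Iic x) x := by
    intro x hx
    rw [hasDerivWithinAt_iff_tendsto_slope, Iic_sdiff_right]
    apply aux_slope_left (c := x) hx.1
    have hmx : ubar + x • v ∈ 𝒰 := hmem x ⟨hx.1.le, hx.2⟩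
    have hw : ubar + x • v + (-x) • v ∈ 𝒰 := by
      have he : ubar + x • v + (-x) • v = ubar := by module
      rwa [he]
    have h0 := hGateaux2 (ubar + x • v) hmx v ((-x) • v) hw
    have hlv : J'' (ubar + x • v) v ((-x) • v) = -(x * B x) := by
      rw [map_smul]; simp [hB]
    rw [hlv] at h0
    refine h0.congr fun s => ?_
    have he : ubar + x • v + s • (-x) • v = ubar + (x - s * x) • v := by
      rw [smul_smul, sub_smul]; module
    simp only [hg, he]
  -- continuity on [0,1]
  have hcont : ContinuousOn g (Icc 0 1) := by
    intro x hx
    rcases lt_or_eq_of_le hx.1 with h0 | h0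
    · rcases lt_or_eq_of_le hx.2 with h1 | h1
      · have hr := (hright x ⟨h0.le, h1⟩).continuousWithinAt
        have hl := (hleft x ⟨h0, h1.le⟩).continuousWithinAt
        exact (hl.union hr).mono fun y _ =>
          (le_total y x).imp (fun h => h) fun h => h
      · subst h1
        exact ((hleft 1 ⟨h0, le_refl 1⟩).continuousWithinAt).mono fun y hy => hy.2
    · subst h0
      exact ((hright 0 ⟨le_refl 0, one_pos⟩).continuousWithinAt).mono fun y hy => hy.1
  -- bound on the shifted derivative
  have hBbd : ∀ x ∈ Ico (0:ℝ) 1, ‖B x - J'' ubar v v‖ ≤ ε * ‖v‖ ^ (μ + 1) := by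
    intro x hx
    rcases eq_or_lt_of_le hx.1 with h0 | h0
    · simp only [hB, ← h0, zero_smul, add_zero, sub_self, norm_zero]
      exact hC
    · have hmx : ubar + x • v ∈ 𝒰 := hmem x ⟨hx.1, hx.2.le⟩
      have hnx : ‖x • v‖ = x * ‖v‖ := by
        rw [norm_smul, Real.norm_eq_abs, abs_of_pos h0]
      have hδx : ‖x • v‖ ≤ δ := by
        rw [hnx]
        calc x * ‖v‖ ≤ 1 * ‖v‖ :=
              mul_le_mul_of_nonneg_right hx.2.le (norm_nonneg v)
          _ = ‖v‖ := one_mul _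
          _ ≤ δ := hvδ
      have hkey := hbound (x • v) hmx hδx
      have hsq : J'' (ubar + x • v) (x • v) (x • v) - J'' ubar (x • v) (x • v)
          = x ^ 2 * (B x - J'' ubar v v) := by
        simp only [map_smul, ContinuousLinearMap.smul_apply, smul_eq_mul, hB]
        ring
      have hrp : ‖x • v‖ ^ (μ + 1) = x ^ (μ - 1) * x ^ 2 * ‖v‖ ^ (μ + 1) := by
        rw [hnx, mul_rpow h0.le (norm_nonneg v)]
        congr 1
        rw [← rpow_natCast x 2, ← rpow_add h0]
        congr 1
        push_cast
        ring
      rw [hsq, abs_mul, abs_of_nonneg (sq_nonneg x), hrp] at hkey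
      have hx2 : (0:ℝ) < x ^ 2 := by positivity
      have hxm : x ^ (μ - 1) ≤ 1 :=
        rpow_le_one h0.le hx.2.le (by linarith)
      have : x ^ 2 * |B x - J'' ubar v v| ≤ x ^ 2 * (ε * ‖v‖ ^ (μ + 1)) := by
        calc x ^ 2 * |B x - J'' ubar v v| ≤ ε * (x ^ (μ - 1) * x ^ 2 * ‖v‖ ^ (μ + 1)) := hkey
          _ = x ^ 2 * (ε * ‖v‖ ^ (μ + 1)) * x ^ (μ - 1) := by ring
          _ ≤ x ^ 2 * (ε * ‖v‖ ^ (μ + 1)) * 1 := by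
              apply mul_le_mul_of_nonneg_left hxm
              positivity
          _ = x ^ 2 * (ε * ‖v‖ ^ (μ + 1)) := by ring
      rw [Real.norm_eq_abs]
      exact le_of_mul_le_mul_left this hx2
  -- mean value inequality applied to f t = g t - t * J'' ubar v v
  set f : ℝ → ℝ := fun t => g t - t * J'' ubar v v with hf
  have hfc : ContinuousOn f (Icc 0 1) :=
    hcont.sub ((continuous_id.mul continuous_const).continuousOn)
  have hfd : ∀ x ∈ Ico (0:ℝ) 1,
      HasDerivWithinAt f (B x - J'' ubar v v) (Ici x) x := by
    intro x hx
    exact (hright x hx).sub ((hasDerivAt_mul_const (J'' ubar v v)).hasDerivWithinAt)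
  have hmv := norm_image_sub_le_of_norm_deriv_right_le_segment (a := 0) (b := 1)
    hfc hfd hBbd 1 (by constructor <;> norm_num)
  have hf1 : f 1 = J' (ubar + v) v - J'' ubar v v := by
    simp [hf, hg]
  have hf0 : f 0 = J' ubar v := by
    simp [hf, hg]
  rw [hf1, hf0, Real.norm_eq_abs] at hmv
  calc |J' (ubar + v) v - J' ubar v - J'' ubar v v|
      = |J' (ubar + v) v - J'' ubar v v - J' ubar v| := by ring_nf
    _ ≤ ε * ‖v‖ ^ (μ + 1) * (1 - 0) := hmv
    _ = ε * ‖v‖ ^ (μ + 1) := by ring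

/-- Equivalence of derivative growth and linearized growth under
changing curvature of order `μ` at `ubar`. -/
theorem stmt8_derivative_growth_equivalence
    {U : Type*} [NormedAddCommGroup U] [NormedSpace ℝ U]
    (𝒰 : Set U) (hconv : Convex ℝ 𝒰)
    (J : U → ℝ) (J' : U → U →L[ℝ] ℝ) (J'' : U → U →L[ℝ] U →L[ℝ] ℝ)
    (hGateaux1 : ∀ u ∈ 𝒰, ∀ v : U, u + v ∈ 𝒰 →
      Tendsto (fun t : ℝ => (J (u + t • v) - J u) / t) (𝓝[>] 0) (𝓝 (J' u v)))
    (hGateaux2 : ∀ u ∈ 𝒰, ∀ v w : U, u + w ∈ 𝒰 →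
      Tendsto (fun t : ℝ => (J' (u + t • w) v - J' u v) / t) (𝓝[>] 0) (𝓝 (J'' u v w)))
    (ubar : U) (hubar : ubar ∈ 𝒰) (μ : ℝ) (hμ : 1 ≤ μ)
    (hcurv : ∀ ε > (0:ℝ), ∃ δ > (0:ℝ), ∀ v : U, ubar + v ∈ 𝒰 → ‖v‖ ≤ δ →
      |J'' (ubar + v) v v - J'' ubar v v| ≤ ε * ‖v‖ ^ (μ + 1)) :
    (∃ α > (0:ℝ), ∃ c > (0:ℝ), ∀ u ∈ 𝒰, ‖u - ubar‖ ≤ α →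
        c * ‖u - ubar‖ ^ (μ + 1) ≤ J' u (u - ubar)) ↔
    (∃ α > (0:ℝ), ∃ c > (0:ℝ), ∀ u ∈ 𝒰, ‖u - ubar‖ ≤ α →
        c * ‖u - ubar‖ ^ (μ + 1) ≤
          J' ubar (u - ubar) + J'' ubar (u - ubar) (u - ubar)) := by
  have taylor := aux_taylor 𝒰 hconv J' J'' hGateaux2 ubar hubar μ hμ hcurv
  constructor
  · rintro ⟨α, hα, c, hc, H⟩
    obtain ⟨δ, hδ, htay⟩ := taylor (c / 2) (by linarith)
    refine ⟨min α δ, lt_min hα hδ, c / 2, by linarith, ?_⟩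
    intro u hu hle
    have hv : ubar + (u - ubar) ∈ 𝒰 := by rwa [add_sub_cancel]
    have h1 := htay (u - ubar) hv (hle.trans (min_le_right _ _))
    rw [add_sub_cancel] at h1
    have h2 := H u hu (hle.trans (min_le_left _ _))
    have h3 := abs_le.1 h1
    linarith [h3.1, h3.2]
  · rintro ⟨α, hα, c, hc, H⟩
    obtain ⟨δ, hδ, htay⟩ := taylor (c / 2) (by linarith)
    refine ⟨min α δ, lt_min hα hδ, c / 2, by linarith, ?_⟩
    intro u hu hle
    have hv : ubar + (u - ubar) ∈ 𝒰 := by rwa [add_sub_cancel]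
    have h1 := htay (u - ubar) hv (hle.trans (min_le_right _ _))
    rw [add_sub_cancel] at h1
    have h2 := H u hu (hle.trans (min_le_left _ _))
    have h3 := abs_le.1 h1
    linarith [h3.1, h3.2]
end

section
/- Second-order sufficient condition implies local growth: Let 𝒰 be a convex subset of a normed space, J twice Gateaux differentiable with changing curvature of order μ ∈ [1,2) at ū ∈ 𝒰. Suppose there exists δ > 0 such that J'(ū)(u − ū) + ½J''(ū)(u − ū)² ≥ ‖u − ū‖^{μ+1} for all u ∈ 𝒰 with ‖u − ū‖ ≤ δ. Then there exist c > 0 and δ' > 0 such that J(u) ≥ J(ū) + c‖u − ū‖^{μ+1} for all u ∈ 𝒰 with ‖u − ū‖ ≤ δ'. In particular, ū is a strict local minimizer. -/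
open Filter Topology Real

private lemma slope_helper' {U : Type*} [NormedAddCommGroup U] [NormedSpace ℝ U]
    (F : U → ℝ) (G : ℝ) (p w : U) (c : ℝ) (hc : c ≠ 0)
    (H : Tendsto (fun s : ℝ => (F (p + s • (c • w)) - F p) / s) (𝓝[>] 0) (𝓝 (c * G)))
    (l : Filter ℝ) (hl : Tendsto (fun h : ℝ => h / c) l (𝓝[>] (0:ℝ))) :
    Tendsto (fun h : ℝ => (F (p + h • w) - F p) / h) l (𝓝 G) := by
  have h2 := (H.comp hl).div_const c
  rw [mul_div_cancel_left₀ _ hc] at h2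
  refine h2.congr fun h => ?_
  show (F (p + (h / c) • (c • w)) - F p) / (h / c) / c = _
  rw [smul_smul, div_mul_cancel₀ _ hc, div_div, div_mul_cancel₀ _ hc]

private lemma map_pos' (c : ℝ) (hc : 0 < c) :
    Tendsto (fun h : ℝ => h / c) (𝓝[>] (0:ℝ)) (𝓝[>] (0:ℝ)) := by
  apply tendsto_nhdsWithin_of_tendsto_nhds_of_eventually_within
  · have : Tendsto (fun h : ℝ => h / c) (𝓝 (0:ℝ)) (𝓝 (0/c)) := (tendsto_id.div_const c)
    rw [zero_div] at this
    exact this.mono_left nhdsWithin_le_nhds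
  · filter_upwards [self_mem_nhdsWithin] with h hh
    exact div_pos hh hc

private lemma map_neg' (c : ℝ) (hc : c < 0) :
    Tendsto (fun h : ℝ => h / c) (𝓝[<] (0:ℝ)) (𝓝[>] (0:ℝ)) := by
  apply tendsto_nhdsWithin_of_tendsto_nhds_of_eventually_within
  · have : Tendsto (fun h : ℝ => h / c) (𝓝 (0:ℝ)) (𝓝 (0/c)) := (tendsto_id.div_const c)
    rw [zero_div] at this
    exact this.mono_left nhdsWithin_le_nhds
  · filter_upwards [self_mem_nhdsWithin] with h hh
    exact div_pos_of_neg_of_neg hh hc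

/-- from one-sided slope limits on both sides, get `HasDerivAt`. -/
private lemma hasDerivAt_of_slopes (f : ℝ → ℝ) (t L : ℝ)
    (hl : Tendsto (fun h : ℝ => (f (t + h) - f t) / h) (𝓝[<] 0) (𝓝 L))
    (hr : Tendsto (fun h : ℝ => (f (t + h) - f t) / h) (𝓝[>] 0) (𝓝 L)) :
    HasDerivAt f L t := by
  rw [hasDerivAt_iff_tendsto_slope_zero, ← nhdsLT_sup_nhdsGT (0:ℝ), tendsto_sup]
  constructor
  · exact hl.congr fun h => by rw [smul_eq_mul, inv_mul_eq_div]
  · exact hr.congr fun h => by rw [smul_eq_mul, inv_mul_eq_div]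

/-- right slope limit at `0` gives continuity within `Icc 0 1` at `0`. -/
private lemma contWithin_zero (f : ℝ → ℝ) (L : ℝ)
    (hr : Tendsto (fun h : ℝ => (f (0 + h) - f 0) / h) (𝓝[>] 0) (𝓝 L)) :
    ContinuousWithinAt f (Set.Icc (0:ℝ) 1) 0 := by
  have h1 : HasDerivWithinAt f L (Set.Ici (0:ℝ)) 0 := by
    rw [hasDerivWithinAt_iff_tendsto_slope, Set.Ici_sdiff_left]
    exact hr.congr fun h => by rw [slope_def_field, zero_add, sub_zero]
  exact h1.continuousWithinAt.mono (Set.Icc_subset_Ici_self)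

private lemma map_nhdsLT (a : ℝ) : 𝓝[<] a = Filter.map (fun h : ℝ => a + h) (𝓝[<] (0:ℝ)) := by
  rw [nhdsWithin, nhdsWithin, Filter.map_inf (add_right_injective a),
    map_add_left_nhds_zero, Filter.map_principal]
  congr 1
  apply congrArg
  ext x
  constructor
  · intro hx; exact ⟨x - a, by simp only [Set.mem_Iio] at hx ⊢; linarith, by ring⟩
  · rintro ⟨y, hy, rfl⟩; simp only [Set.mem_Iio] at hy ⊢; linarith

/-- left slope limit at `1` gives continuity within `Icc 0 1` at `1`. -/
private lemma contWithin_one (f : ℝ → ℝ) (L : ℝ)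
    (hl : Tendsto (fun h : ℝ => (f (1 + h) - f 1) / h) (𝓝[<] 0) (𝓝 L)) :
    ContinuousWithinAt f (Set.Icc (0:ℝ) 1) 1 := by
  have h1 : HasDerivWithinAt f L (Set.Iic (1:ℝ)) 1 := by
    rw [hasDerivWithinAt_iff_tendsto_slope, Set.Iic_diff_right, map_nhdsLT, tendsto_map'_iff]
    refine hl.congr fun h => ?_
    show _ = slope f 1 (1 + h)
    rw [slope_def_field, add_sub_cancel_left]
  exact h1.continuousWithinAt.mono (Set.Icc_subset_Iic_self)

/-- Second-order sufficient condition implies local growth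
(abstract form of Theorem 4.9). Here changing curvature is stated along segments
`ubar + θ(u − ubar)`, `θ ∈ [0,1]`. -/
theorem stmt9_ssc_implies_growth
    {U : Type*} [NormedAddCommGroup U] [NormedSpace ℝ U]
    (𝒰 : Set U) (hconv : Convex ℝ 𝒰)
    (J : U → ℝ) (J' : U → U →L[ℝ] ℝ) (J'' : U → U →L[ℝ] U →L[ℝ] ℝ)
    (hGateaux1 : ∀ u ∈ 𝒰, ∀ v : U, u + v ∈ 𝒰 →
      Tendsto (fun t : ℝ => (J (u + t • v) - J u) / t) (𝓝[>] 0) (𝓝 (J' u v)))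
    (hGateaux2 : ∀ u ∈ 𝒰, ∀ v w : U, u + w ∈ 𝒰 →
      Tendsto (fun t : ℝ => (J' (u + t • w) v - J' u v) / t) (𝓝[>] 0) (𝓝 (J'' u v w)))
    (ubar : U) (hubar : ubar ∈ 𝒰) (μ : ℝ) (hμ1 : 1 ≤ μ) (hμ2 : μ < 2)
    (hcurv : ∀ ε > (0:ℝ), ∃ δ > (0:ℝ), ∀ θ ∈ Set.Icc (0:ℝ) 1, ∀ u ∈ 𝒰,
      ‖u - ubar‖ ≤ δ →
      |J'' (ubar + θ • (u - ubar)) (u - ubar) (u - ubar) - J'' ubar (u - ubar) (u - ubar)|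
        ≤ ε * ‖u - ubar‖ ^ (μ + 1))
    (δ : ℝ) (hδ : 0 < δ)
    (hssc : ∀ u ∈ 𝒰, ‖u - ubar‖ ≤ δ →
      ‖u - ubar‖ ^ (μ + 1) ≤
        J' ubar (u - ubar) + (1 / 2) * J'' ubar (u - ubar) (u - ubar)) :
    ∃ c > (0:ℝ), ∃ δ' > (0:ℝ), ∀ u ∈ 𝒰, ‖u - ubar‖ ≤ δ' →
      J ubar + c * ‖u - ubar‖ ^ (μ + 1) ≤ J u := by
  obtain ⟨δ₁, hδ₁, hcurv1⟩ := hcurv 1 one_pos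
  refine ⟨1/2, by norm_num, min δ δ₁, lt_min hδ hδ₁, ?_⟩
  intro u hu hle
  set v : U := u - ubar with hv
  have hleδ : ‖v‖ ≤ δ := hle.trans (min_le_left _ _)
  have hleδ₁ : ‖v‖ ≤ δ₁ := hle.trans (min_le_right _ _)
  set P : ℝ := ‖v‖ ^ (μ + 1) with hP
  -- the segment lies in 𝒰
  have hpt : ∀ t ∈ Set.Icc (0:ℝ) 1, ubar + t • v ∈ 𝒰 := by
    intro t ht
    have h1 : (1 - t) • ubar + t • u ∈ 𝒰 :=
      hconv hubar hu (by linarith [ht.2]) ht.1 (by ring)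
    have h2 : ubar + t • v = (1 - t) • ubar + t • u := by rw [hv]; module
    rw [h2]; exact h1
  set φ : ℝ → ℝ := fun t => J (ubar + t • v) with hφ
  set ψ : ℝ → ℝ := fun t => J' (ubar + t • v) v with hψ
  set Q : ℝ → ℝ := fun t => J'' (ubar + t • v) v v with hQ
  -- endpoint-direction memberships
  have hmemu : ∀ t : ℝ, ubar + t • v + (1 - t) • v ∈ 𝒰 := by
    intro t
    have : ubar + t • v + (1 - t) • v = u := by rw [hv]; module
    rw [this]; exact hu
  have hmemb : ∀ t : ℝ, ubar + t • v + (-t) • v ∈ 𝒰 := by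
    intro t
    have : ubar + t • v + (-t) • v = ubar := by module
    rw [this]; exact hubar
  -- one-sided slope limits for φ
  have hφr : ∀ t ∈ Set.Ico (0:ℝ) 1,
      Tendsto (fun h : ℝ => (φ (t + h) - φ t) / h) (𝓝[>] 0) (𝓝 (ψ t)) := by
    intro t ht
    have hc : (0:ℝ) < 1 - t := by linarith [ht.2]
    have hH : Tendsto (fun s : ℝ => (J (ubar + t • v + s • ((1 - t) • v)) - J (ubar + t • v)) / s)
        (𝓝[>] 0) (𝓝 ((1 - t) * ψ t)) := by
      have hG := hGateaux1 _ (hpt t ⟨ht.1, ht.2.le⟩) ((1 - t) • v) (hmemu t)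
      rwa [map_smul, smul_eq_mul] at hG
    have := slope_helper' J (ψ t) (ubar + t • v) v (1 - t) hc.ne' hH _ (map_pos' _ hc)
    refine this.congr fun h => ?_
    rw [show ubar + t • v + h • v = ubar + (t + h) • v from by module]
  have hφl : ∀ t ∈ Set.Ioc (0:ℝ) 1,
      Tendsto (fun h : ℝ => (φ (t + h) - φ t) / h) (𝓝[<] 0) (𝓝 (ψ t)) := by
    intro t ht
    have hc : -t < 0 := by linarith [ht.1]
    have hH : Tendsto (fun s : ℝ => (J (ubar + t • v + s • ((-t) • v)) - J (ubar + t • v)) / s)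
        (𝓝[>] 0) (𝓝 ((-t) * ψ t)) := by
      have hG := hGateaux1 _ (hpt t ⟨ht.1.le, ht.2⟩) ((-t) • v) (hmemb t)
      rwa [map_smul, smul_eq_mul] at hG
    have := slope_helper' J (ψ t) (ubar + t • v) v (-t) hc.ne hH _ (map_neg' _ hc)
    refine this.congr fun h => ?_
    rw [show ubar + t • v + h • v = ubar + (t + h) • v from by module]
  -- one-sided slope limits for ψ
  have hψr : ∀ t ∈ Set.Ico (0:ℝ) 1,
      Tendsto (fun h : ℝ => (ψ (t + h) - ψ t) / h) (𝓝[>] 0) (𝓝 (Q t)) := by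
    intro t ht
    have hc : (0:ℝ) < 1 - t := by linarith [ht.2]
    have hH : Tendsto (fun s : ℝ =>
        ((fun x => J' x v) (ubar + t • v + s • ((1 - t) • v)) - (fun x => J' x v) (ubar + t • v)) / s)
        (𝓝[>] 0) (𝓝 ((1 - t) * Q t)) := by
      have hG := hGateaux2 _ (hpt t ⟨ht.1, ht.2.le⟩) v ((1 - t) • v) (hmemu t)
      rwa [map_smul, smul_eq_mul] at hG
    have := slope_helper' (fun x => J' x v) (Q t) (ubar + t • v) v (1 - t) hc.ne' hH _ (map_pos' _ hc)
    refine this.congr fun h => ?_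
    rw [show ubar + t • v + h • v = ubar + (t + h) • v from by module]
  have hψl : ∀ t ∈ Set.Ioc (0:ℝ) 1,
      Tendsto (fun h : ℝ => (ψ (t + h) - ψ t) / h) (𝓝[<] 0) (𝓝 (Q t)) := by
    intro t ht
    have hc : -t < 0 := by linarith [ht.1]
    have hH : Tendsto (fun s : ℝ =>
        ((fun x => J' x v) (ubar + t • v + s • ((-t) • v)) - (fun x => J' x v) (ubar + t • v)) / s)
        (𝓝[>] 0) (𝓝 ((-t) * Q t)) := by
      have hG := hGateaux2 _ (hpt t ⟨ht.1.le, ht.2⟩) v ((-t) • v) (hmemb t)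
      rwa [map_smul, smul_eq_mul] at hG
    have := slope_helper' (fun x => J' x v) (Q t) (ubar + t • v) v (-t) hc.ne hH _ (map_neg' _ hc)
    refine this.congr fun h => ?_
    rw [show ubar + t • v + h • v = ubar + (t + h) • v from by module]
  -- derivatives on the interior
  have hφd : ∀ t ∈ Set.Ioo (0:ℝ) 1, HasDerivAt φ (ψ t) t := fun t ht =>
    hasDerivAt_of_slopes φ t (ψ t) (hφl t ⟨ht.1, ht.2.le⟩) (hφr t ⟨ht.1.le, ht.2⟩)
  have hψd : ∀ t ∈ Set.Ioo (0:ℝ) 1, HasDerivAt ψ (Q t) t := fun t ht =>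
    hasDerivAt_of_slopes ψ t (Q t) (hψl t ⟨ht.1, ht.2.le⟩) (hψr t ⟨ht.1.le, ht.2⟩)
  -- continuity on Icc
  have hcontOn : ∀ (f g : ℝ → ℝ), (∀ t ∈ Set.Ico (0:ℝ) 1,
        Tendsto (fun h : ℝ => (f (t + h) - f t) / h) (𝓝[>] 0) (𝓝 (g t))) →
      (∀ t ∈ Set.Ioc (0:ℝ) 1,
        Tendsto (fun h : ℝ => (f (t + h) - f t) / h) (𝓝[<] 0) (𝓝 (g t))) →
      (∀ t ∈ Set.Ioo (0:ℝ) 1, HasDerivAt f (g t) t) →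
      ContinuousOn f (Set.Icc (0:ℝ) 1) := by
    intro f g hfr hfl hfd t ht
    rcases eq_or_lt_of_le ht.1 with h0 | h0
    · exact h0 ▸ contWithin_zero f (g 0) (hfr 0 ⟨le_refl _, one_pos⟩)
    rcases eq_or_lt_of_le ht.2 with h1 | h1
    · rw [h1]; exact contWithin_one f (g 1) (hfl 1 ⟨one_pos, le_refl _⟩)
    · exact ((hfd t ⟨h0, h1⟩).continuousAt).continuousWithinAt
  have hφc : ContinuousOn φ (Set.Icc (0:ℝ) 1) := hcontOn φ ψ hφr hφl hφd
  have hψc : ContinuousOn ψ (Set.Icc (0:ℝ) 1) := hcontOn ψ Q hψr hψl hψd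
  -- curvature lower bound
  set m : ℝ := J'' ubar v v - P with hm
  have hQlb : ∀ t ∈ Set.Icc (0:ℝ) 1, m ≤ Q t := by
    intro t ht
    have h1 := hcurv1 t ht u hu hleδ₁
    rw [← hv, ← hP] at h1
    have := abs_le.mp h1
    simp only [hQ, hm]
    nlinarith [this.1]
  -- first monotonicity: ψ t ≥ ψ 0 + t * m
  have hψlb : ∀ t ∈ Set.Icc (0:ℝ) 1, ψ 0 + t * m ≤ ψ t := by
    have hmono : MonotoneOn (fun t => ψ t - t * m) (Set.Icc (0:ℝ) 1) := by
      apply monotoneOn_of_deriv_nonneg (convex_Icc 0 1)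
      · exact hψc.sub ((continuous_id.mul continuous_const).continuousOn)
      · intro x hx
        rw [interior_Icc] at hx
        exact (((hψd x hx).sub (hasDerivAt_mul_const m)).differentiableAt).differentiableWithinAt
      · intro x hx
        rw [interior_Icc] at hx
        rw [show deriv (fun t => ψ t - t * m) x = Q x - m from ((hψd x hx).sub (hasDerivAt_mul_const m)).deriv]
        have := hQlb x ⟨hx.1.le, hx.2.le⟩
        linarith
    intro t ht
    have := hmono (Set.left_mem_Icc.mpr zero_le_one) ht ht.1
    simp only [zero_mul, sub_zero] at this
    linarith
  -- second monotonicity: φ 1 ≥ φ 0 + ψ 0 + m / 2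
  have hkey : φ 0 + ψ 0 + m / 2 ≤ φ 1 := by
    have hmono : MonotoneOn (fun t => φ t - (t * ψ 0 + t ^ 2 / 2 * m)) (Set.Icc (0:ℝ) 1) := by
      apply monotoneOn_of_deriv_nonneg (convex_Icc 0 1)
      · exact hφc.sub (((continuous_id.mul continuous_const).add (((continuous_pow 2).div_const 2).mul continuous_const)).continuousOn)
      · intro x hx
        rw [interior_Icc] at hx
        have hd : HasDerivAt (fun t : ℝ => t * ψ 0 + t ^ 2 / 2 * m) (ψ 0 + x * m) x := by
          have h1 : HasDerivAt (fun t : ℝ => t * ψ 0 + t ^ 2 / 2 * m)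
              (ψ 0 + (2 * x ^ 1) / 2 * m) x :=
            (hasDerivAt_mul_const (ψ 0)).add (((hasDerivAt_pow 2 x).div_const 2).mul_const m)
          convert h1 using 1; ring
        exact (((hφd x hx).sub hd).differentiableAt).differentiableWithinAt
      · intro x hx
        rw [interior_Icc] at hx
        have hd : HasDerivAt (fun t : ℝ => t * ψ 0 + t ^ 2 / 2 * m) (ψ 0 + x * m) x := by
          have h1 : HasDerivAt (fun t : ℝ => t * ψ 0 + t ^ 2 / 2 * m)
              (ψ 0 + (2 * x ^ 1) / 2 * m) x :=
            (hasDerivAt_mul_const (ψ 0)).add (((hasDerivAt_pow 2 x).div_const 2).mul_const m)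
          convert h1 using 1; ring
        rw [show deriv (fun t => φ t - (t * ψ 0 + t ^ 2 / 2 * m)) x = ψ x - (ψ 0 + x * m) from ((hφd x hx).sub hd).deriv]
        have := hψlb x ⟨hx.1.le, hx.2.le⟩
        linarith
    have := hmono (Set.left_mem_Icc.mpr zero_le_one) (Set.right_mem_Icc.mpr zero_le_one)
      zero_le_one
    simp only [zero_mul, sub_zero] at this
    nlinarith [this]
  -- assemble
  have hφ1 : φ 1 = J u := by
    simp only [hφ, one_smul, hv]
    rw [add_sub_cancel]
  have hφ0 : φ 0 = J ubar := by simp [hφ]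
  have hψ0 : ψ 0 = J' ubar v := by simp [hψ]
  have hsscu := hssc u hu hleδ
  rw [← hv, ← hP] at hsscu
  rw [hφ1, hφ0, hψ0, hm] at hkey
  linarith
end

section
/- Stability of critical points under bounded perturbations of the gradient: Let U be a normed space, 𝒰 ⊆ U convex, J Gateaux differentiable on 𝒰, and ū ∈ 𝒰, μ ≥ 1. Suppose there exist δ, c > 0 such that J'(u)(u − ū) ≥ c‖u − ū‖^{μ+1} for all u ∈ 𝒰 with ‖u − ū‖ ≤ δ. Then for every ρ ∈ U* and every u ∈ 𝒰 satisfying ‖u − ū‖ ≤ δ and the perturbed variational inequality (J'(u) − ρ)(v − u) ≥ 0 for all v ∈ 𝒰, we have ‖u − ū‖ ≤ c^{−1/μ} ‖ρ‖_{U*}^{1/μ}. -/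
open Real

/-- Stability of critical points under bounded perturbations of the
gradient (abstract form of Lemma 5.4). -/
theorem stmt10_perturbed_stability
    {U : Type*} [NormedAddCommGroup U] [NormedSpace ℝ U]
    (𝒰 : Set U) (hconv : Convex ℝ 𝒰)
    (J' : U → U →L[ℝ] ℝ)
    (ubar : U) (hubar : ubar ∈ 𝒰) (μ : ℝ) (hμ : 1 ≤ μ)
    (δ c : ℝ) (hδ : 0 < δ) (hc : 0 < c)
    (hgrowth : ∀ u ∈ 𝒰, ‖u - ubar‖ ≤ δ → c * ‖u - ubar‖ ^ (μ + 1) ≤ J' u (u - ubar)) :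
    ∀ ρ : U →L[ℝ] ℝ, ∀ u ∈ 𝒰, ‖u - ubar‖ ≤ δ →
      (∀ v ∈ 𝒰, 0 ≤ J' u (v - u) - ρ (v - u)) →
      ‖u - ubar‖ ≤ c ^ (-(1 / μ)) * ‖ρ‖ ^ (1 / μ) := by
  intro ρ u hu hle hvi
  set t : ℝ := ‖u - ubar‖ with ht
  have hμ0 : 0 < μ := lt_of_lt_of_le one_pos hμ
  have hrhs : c ^ (-(1 / μ)) * ‖ρ‖ ^ (1 / μ) = (‖ρ‖ / c) ^ (1 / μ) := by
    rw [div_rpow (norm_nonneg ρ) hc.le, rpow_neg hc.le, div_eq_mul_inv, mul_comm, ← div_eq_mul_inv]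
  rcases eq_or_lt_of_le (norm_nonneg (u - ubar)) with h0 | h0
  · rw [ht, ← h0, hrhs]
    positivity
  · -- test with v = ubar
    have hvi' := hvi ubar hubar
    have h1 : J' u (u - ubar) ≤ ρ (u - ubar) := by
      have : (ubar - u) = -(u - ubar) := by abel
      rw [this, map_neg, map_neg] at hvi'
      linarith
    have h2 : ρ (u - ubar) ≤ ‖ρ‖ * t := le_trans (le_abs_self _) (ρ.le_opNorm (u - ubar))
    have h3 : c * t ^ (μ + 1) ≤ ‖ρ‖ * t := le_trans (hgrowth u hu hle) (h1.trans h2)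
    have hsplit : t ^ (μ + 1) = t ^ μ * t := by
      rw [rpow_add h0, rpow_one]
    have h4 : c * t ^ μ ≤ ‖ρ‖ := by
      rw [hsplit, ← mul_assoc] at h3
      exact le_of_mul_le_mul_right h3 h0
    have h5 : t ^ μ ≤ ‖ρ‖ / c := (le_div_iff₀' hc).mpr h4
    have h6 : (t ^ μ) ^ (1 / μ) ≤ (‖ρ‖ / c) ^ (1 / μ) :=
      rpow_le_rpow (rpow_nonneg h0.le μ) h5 (by positivity)
    rw [hrhs]
    rwa [← rpow_mul h0.le, mul_one_div, div_self hμ0.ne', rpow_one] at h6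
end
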